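/- arXiv:2312.00606 — 8 statements merged into one kernel-verified Lean document; each statement's English description precedes it below -/
import Mathlib

section
/- Let y_i : [0,∞) → ℝ, i ∈ ℤ, be an M-periodic (y_{i+M} = y_i) C¹ solution of ℓ ẏ_i = Δ₊(V̄_i) + κ Δ₊Δ₋V_i, where V_i = V(y_i), V is C¹ nondecreasing, κ ≥ 0, ℓ > 0, and the averaging coefficients satisfy c_0 ≥ c_1 ≥ ⋯ ≥ c_{N−1} ≥ 0, c_N = 0, Σ c_j = 1. If η : ℝ → ℝ is C² and convex, then the total entropy t ↦ Σ_{i=1}^{M} η(y_i(t)) is non-increasing. -/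
open Finset

section Aux

/-- Periodic sums over `Icc 1 M` are invariant under shift by one. -/
lemma ftl_shift_one (M : ℕ) (g : ℤ → ℝ) (hg : ∀ i : ℤ, g (i + M) = g i) :
    ∑ i ∈ Finset.Icc (1:ℤ) (M:ℤ), g (i + 1) = ∑ i ∈ Finset.Icc (1:ℤ) (M:ℤ), g i := by
  rcases Nat.eq_zero_or_pos M with h | h
  · subst h; simp
  have hM1 : (1:ℤ) ≤ (M:ℤ) := by exact_mod_cast h
  have e1 : ∑ i ∈ Finset.Icc (1:ℤ) (M:ℤ), g (i + 1)
      = ∑ i ∈ Finset.Icc (2:ℤ) ((M:ℤ)+1), g i := by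
    have h' : Finset.Icc (2:ℤ) ((M:ℤ)+1) = (Finset.Icc (1:ℤ) (M:ℤ)).map (addRightEmbedding 1) := by
      rw [Finset.map_add_right_Icc]; norm_num
    rw [h', Finset.sum_map]
    rfl
  have e2 : Finset.Icc (1:ℤ) ((M:ℤ)+1) = insert (1:ℤ) (Finset.Icc (2:ℤ) ((M:ℤ)+1)) := by
    ext x; simp only [Finset.mem_Icc, Finset.mem_insert]; omega
  have e3 : Finset.Icc (1:ℤ) ((M:ℤ)+1) = insert ((M:ℤ)+1) (Finset.Icc (1:ℤ) (M:ℤ)) := by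
    ext x; simp only [Finset.mem_Icc, Finset.mem_insert]; omega
  have h2 : (1:ℤ) ∉ Finset.Icc (2:ℤ) ((M:ℤ)+1) := by simp
  have h3 : (M:ℤ)+1 ∉ Finset.Icc (1:ℤ) (M:ℤ) := by simp
  have key : g 1 + ∑ i ∈ Finset.Icc (2:ℤ) ((M:ℤ)+1), g i
      = g ((M:ℤ)+1) + ∑ i ∈ Finset.Icc (1:ℤ) (M:ℤ), g i := by
    rw [← Finset.sum_insert h2, ← Finset.sum_insert h3, ← e2, ← e3]
  have hgM : g ((M:ℤ)+1) = g 1 := by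
    have := hg 1; rwa [add_comm] at this
  rw [e1]; linarith [key]

/-- Periodic sums over `Icc 1 M` are invariant under any integer shift. -/
lemma ftl_shift (M : ℕ) (g : ℤ → ℝ) (hg : ∀ i : ℤ, g (i + M) = g i) (k : ℤ) :
    ∑ i ∈ Finset.Icc (1:ℤ) (M:ℤ), g (i + k) = ∑ i ∈ Finset.Icc (1:ℤ) (M:ℤ), g i := by
  induction k using Int.induction_on with
  | zero => simp
  | succ k ih =>
      have := ftl_shift_one M (fun i => g (i + k)) (fun i => by
        simpa [add_right_comm] using hg (i + k))
      calc ∑ i ∈ Finset.Icc (1:ℤ) (M:ℤ), g (i + (k + 1))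
          = ∑ i ∈ Finset.Icc (1:ℤ) (M:ℤ), g ((i + 1) + k) := by
            apply Finset.sum_congr rfl; intro i _; ring_nf
        _ = ∑ i ∈ Finset.Icc (1:ℤ) (M:ℤ), g (i + k) := this
        _ = _ := ih
  | pred k ih =>
      have := ftl_shift_one M (fun i => g (i + (-(k:ℤ) - 1))) (fun i => by
        simpa [add_right_comm] using hg (i + (-(k:ℤ) - 1)))
      have e : ∑ i ∈ Finset.Icc (1:ℤ) (M:ℤ), g ((i + 1) + (-(k:ℤ) - 1))
          = ∑ i ∈ Finset.Icc (1:ℤ) (M:ℤ), g (i + -(k:ℤ)) := by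
        apply Finset.sum_congr rfl; intro i _; ring_nf
      calc ∑ i ∈ Finset.Icc (1:ℤ) (M:ℤ), g (i + (-(k:ℤ) - 1))
          = ∑ i ∈ Finset.Icc (1:ℤ) (M:ℤ), g ((i + 1) + (-(k:ℤ) - 1)) := this.symm
        _ = ∑ i ∈ Finset.Icc (1:ℤ) (M:ℤ), g (i + -(k:ℤ)) := e
        _ = _ := ih

/-- Abel summation identity. -/
lemma ftl_abel (c : ℕ → ℝ) (B : ℕ → ℝ) (n : ℕ) :
    ∑ j ∈ Finset.range (n+1), c j * (B (j+1) - B j)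
      = ∑ j ∈ Finset.range n, (c j - c (j+1)) * (B (j+1) - B 0) + c n * (B (n+1) - B 0) := by
  induction n with
  | zero => simp
  | succ n ih =>
      rw [Finset.sum_range_succ, ih, Finset.sum_range_succ]
      ring

/-- A monotone function has nonnegative derivative (wherever differentiable;
`deriv` is zero elsewhere). -/
lemma ftl_deriv_nonneg {V : ℝ → ℝ} (hVmono : Monotone V) (x : ℝ) : 0 ≤ deriv V x := by
  by_cases hd : DifferentiableAt ℝ V x
  · have h := hd.hasDerivAt
    rw [hasDerivAt_iff_tendsto_slope] at h
    have h' : Filter.Tendsto (slope V x) (nhdsWithin x (Set.Ioi x)) (nhds (deriv V x)) :=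
      h.mono_left (nhdsWithin_mono x fun y hy => ne_of_gt hy)
    refine le_of_tendsto_of_tendsto tendsto_const_nhds h' ?_
    filter_upwards [self_mem_nhdsWithin] with y hy
    have hxy : x < y := hy
    have : 0 ≤ V y - V x := sub_nonneg.2 (hVmono hxy.le)
    rw [slope_def_field]
    exact div_nonneg this (sub_nonneg.2 hxy.le)
  · simp [deriv_zero_of_not_differentiableAt hd]

end Aux

/-- Entropy flux inequality: `η'(a)(V(b) - V(a)) ≤ G(b) - G(a)` where `G' = η' V'`. -/
lemma ftl_flux {V η : ℝ → ℝ} (hV : ContDiff ℝ 1 V) (hVmono : Monotone V)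
    (hη : ContDiff ℝ 2 η) (hconv : ConvexOn ℝ Set.univ η) (a b : ℝ) :
    deriv η a * (V b - V a) ≤ (∫ s in (0:ℝ)..b, deriv η s * deriv V s)
      - ∫ s in (0:ℝ)..a, deriv η s * deriv V s := by
  have hη'c : Continuous (deriv η) := hη.continuous_deriv one_le_two
  have hV'c : Continuous (deriv V) := hV.continuous_deriv le_rfl
  have hηd : Differentiable ℝ η := hη.differentiable two_ne_zero
  have hVd : Differentiable ℝ V := hV.differentiable one_ne_zero
  have hη'mono : Monotone (deriv η) := by
    have := hconv.monotoneOn_deriv (fun x _ => hηd x)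
    intro x y hxy
    exact this (Set.mem_univ x) (Set.mem_univ y) hxy
  have hV'nonneg : ∀ x, 0 ≤ deriv V x := ftl_deriv_nonneg hVmono
  have hint : ∀ (u v : ℝ), IntervalIntegrable (fun s => deriv η s * deriv V s) MeasureTheory.volume u v :=
    fun u v => (hη'c.mul hV'c).intervalIntegrable u v
  have hGdiff : (∫ s in (0:ℝ)..b, deriv η s * deriv V s)
      - ∫ s in (0:ℝ)..a, deriv η s * deriv V s
      = ∫ s in a..b, deriv η s * deriv V s :=
    intervalIntegral.integral_interval_sub_left (hint 0 b) (hint 0 a)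
  have hVdiff : V b - V a = ∫ s in a..b, deriv V s :=
    (intervalIntegral.integral_deriv_eq_sub (fun x _ => hVd x)
      (hV'c.intervalIntegrable a b)).symm
  rw [hGdiff, hVdiff, ← intervalIntegral.integral_const_mul]
  rcases le_total a b with hab | hab
  · apply intervalIntegral.integral_mono_on hab
      ((continuous_const.mul hV'c).intervalIntegrable a b) (hint a b)
    intro s hs
    exact mul_le_mul_of_nonneg_right (hη'mono hs.1) (hV'nonneg s)
  · rw [intervalIntegral.integral_symm b a, intervalIntegral.integral_symm b a]
    apply neg_le_neg
    apply intervalIntegral.integral_mono_on hab (hint b a)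
      ((continuous_const.mul hV'c).intervalIntegrable b a)
    intro s hs
    exact mul_le_mul_of_nonneg_right (hη'mono hs.2) (hV'nonneg s)

/-- Entropy decay for the nonlocal Follow-the-Leader model in Lagrangian form:
if `ℓ ẏ_i = Δ₊(V̄_i) + κ Δ₊Δ₋ V_i` with `M`-periodic data, then the total entropy
`t ↦ ∑_{i=1}^M η(y_i(t))` is non-increasing on `[0,∞)`. -/
theorem stmt_5 (M : ℕ) (hM : 1 ≤ M) (N : ℕ) (hN : 1 ≤ N)
    (ℓ κ : ℝ) (hℓ : 0 < ℓ) (hκ : 0 ≤ κ)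
    (c : ℕ → ℝ) (hcmono : ∀ j < N, c (j + 1) ≤ c j)
    (hcnonneg : ∀ j ≤ N, 0 ≤ c j) (hcN : c N = 0)
    (hcsum : ∑ j ∈ Finset.range (N + 1), c j = 1)
    (V : ℝ → ℝ) (hV : ContDiff ℝ 1 V) (hVmono : Monotone V)
    (y : ℤ → ℝ → ℝ)
    (hper : ∀ i : ℤ, ∀ t : ℝ, y (i + M) t = y i t)
    (hode : ∀ i : ℤ, ∀ t : ℝ, 0 ≤ t →
      HasDerivAt (y i)
        (((∑ j ∈ Finset.range (N + 1), c j * V (y (i + 1 + j) t)) -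
            (∑ j ∈ Finset.range (N + 1), c j * V (y (i + j) t)) +
          κ * (V (y (i + 1) t) - 2 * V (y i t) + V (y (i - 1) t))) / ℓ) t)
    (η : ℝ → ℝ) (hη : ContDiff ℝ 2 η) (hconv : ConvexOn ℝ Set.univ η) :
    AntitoneOn (fun t => ∑ i ∈ Finset.Icc (1:ℤ) (M:ℤ), η (y i t)) (Set.Ici 0) := by
  have hηd : Differentiable ℝ η := hη.differentiable two_ne_zero
  set G : ℝ → ℝ := fun u => ∫ s in (0:ℝ)..u, deriv η s * deriv V s with hGdef
  have hflux : ∀ a b : ℝ, deriv η a * (V b - V a) ≤ G b - G a :=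
    fun a b => ftl_flux hV hVmono hη hconv a b
  -- the right-hand side of the ODE
  set R : ℤ → ℝ → ℝ := fun i t =>
    ((∑ j ∈ Finset.range (N + 1), c j * V (y (i + 1 + j) t)) -
      (∑ j ∈ Finset.range (N + 1), c j * V (y (i + j) t)) +
      κ * (V (y (i + 1) t) - 2 * V (y i t) + V (y (i - 1) t))) / ℓ with hRdef
  -- derivative of the total entropy
  have hD : ∀ t : ℝ, 0 ≤ t → HasDerivAt (fun t => ∑ i ∈ Finset.Icc (1:ℤ) (M:ℤ), η (y i t))
      (∑ i ∈ Finset.Icc (1:ℤ) (M:ℤ), deriv η (y i t) * R i t) t := by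
    intro t ht
    apply HasDerivAt.fun_sum
    intro i _
    have := ((hηd (y i t)).hasDerivAt).comp t (hode i t ht)
    simpa [Function.comp_def, hRdef] using this
  -- the derivative is nonpositive
  have hkey : ∀ t : ℝ, 0 ≤ t →
      (∑ i ∈ Finset.Icc (1:ℤ) (M:ℤ), deriv η (y i t) * R i t) ≤ 0 := by
    intro t _
    set F : ℤ → ℝ := fun i => deriv η (y i t) with hF
    set A : ℤ → ℝ := fun i => V (y i t) with hA
    set Gy : ℤ → ℝ := fun i => G (y i t) with hGy
    have hGyper : ∀ i : ℤ, Gy (i + M) = Gy i := fun i => by simp [hGy, hper i t]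
    -- numerator rearrangement via Abel summation
    have hnum : ∀ i : ℤ,
        R i t = ((∑ j ∈ Finset.range N, (c j - c (j+1)) * (A (i + 1 + j) - A i))
          + κ * ((A (i+1) - A i) + (A (i-1) - A i))) / ℓ := by
      intro i
      have habel := ftl_abel c (fun j => A (i + j)) N
      simp only [hcN, zero_mul, add_zero] at habel
      have e1 : ∑ j ∈ Finset.range (N+1), c j * A (i + 1 + j)
          = ∑ j ∈ Finset.range (N+1), c j * A (i + (j+1:ℕ)) := by
        apply Finset.sum_congr rfl; intro j _
        congr 2
        push_cast; ring
      have e2 : (∑ j ∈ Finset.range (N+1), c j * A (i + (j+1:ℕ)))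
          - ∑ j ∈ Finset.range (N+1), c j * A (i + j)
          = ∑ j ∈ Finset.range (N+1), c j * (A (i + (j+1:ℕ)) - A (i + j)) := by
        rw [← Finset.sum_sub_distrib]
        apply Finset.sum_congr rfl; intro j _; ring
      have e3 : ∑ j ∈ Finset.range N, (c j - c (j+1)) * (A (i + (j+1:ℕ)) - A (i + (0:ℕ)))
          = ∑ j ∈ Finset.range N, (c j - c (j+1)) * (A (i + 1 + j) - A i) := by
        apply Finset.sum_congr rfl; intro j _
        congr 2
        · congr 1; push_cast; ring
        · congr 1; push_cast; ring
      rw [hRdef]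
      simp only [hA] at e1 e2 e3 habel ⊢
      rw [e1, e2, habel, e3]
      ring
    -- pointwise entropy inequality
    have hterm : ∀ i : ℤ, F i * R i t
        ≤ ((∑ j ∈ Finset.range N, (c j - c (j+1)) * (Gy (i + 1 + j) - Gy i))
          + κ * ((Gy (i+1) - Gy i) + (Gy (i-1) - Gy i))) / ℓ := by
      intro i
      rw [hnum i, div_eq_mul_inv, div_eq_mul_inv, ← mul_assoc]
      apply mul_le_mul_of_nonneg_right _ (by positivity)
      rw [mul_add, Finset.mul_sum]
      apply add_le_add
      · apply Finset.sum_le_sum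
        intro j hj
        have hw : 0 ≤ c j - c (j+1) := sub_nonneg.2 (hcmono j (Finset.mem_range.1 hj))
        calc F i * ((c j - c (j+1)) * (A (i + 1 + j) - A i))
            = (c j - c (j+1)) * (F i * (A (i + 1 + j) - A i)) := by ring
          _ ≤ (c j - c (j+1)) * (Gy (i + 1 + j) - Gy i) := by
              apply mul_le_mul_of_nonneg_left _ hw
              exact hflux (y i t) (y (i + 1 + j) t)
      · calc F i * (κ * ((A (i+1) - A i) + (A (i-1) - A i)))
            = κ * (F i * (A (i+1) - A i) + F i * (A (i-1) - A i)) := by ring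
          _ ≤ κ * ((Gy (i+1) - Gy i) + (Gy (i-1) - Gy i)) := by
              apply mul_le_mul_of_nonneg_left _ hκ
              exact add_le_add (hflux (y i t) (y (i+1) t)) (hflux (y i t) (y (i-1) t))
    -- summing the right-hand side gives zero by periodicity
    have hshift : ∀ k : ℤ, ∑ i ∈ Finset.Icc (1:ℤ) (M:ℤ), (Gy (i + k) - Gy i) = 0 := by
      intro k
      rw [Finset.sum_sub_distrib, ftl_shift M Gy hGyper k, sub_self]
    have hsum0 : ∑ i ∈ Finset.Icc (1:ℤ) (M:ℤ),
        (((∑ j ∈ Finset.range N, (c j - c (j+1)) * (Gy (i + 1 + j) - Gy i))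
          + κ * ((Gy (i+1) - Gy i) + (Gy (i-1) - Gy i))) / ℓ) = 0 := by
      rw [← Finset.sum_div]
      apply div_eq_zero_iff.2
      left
      rw [Finset.sum_add_distrib]
      have h1 : ∑ i ∈ Finset.Icc (1:ℤ) (M:ℤ),
          (∑ j ∈ Finset.range N, (c j - c (j+1)) * (Gy (i + 1 + j) - Gy i)) = 0 := by
        rw [Finset.sum_comm]
        apply Finset.sum_eq_zero
        intro j _
        rw [← Finset.mul_sum]
        have : ∑ i ∈ Finset.Icc (1:ℤ) (M:ℤ), (Gy (i + 1 + j) - Gy i) = 0 := by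
          have := hshift (1 + j)
          rw [← this]
          apply Finset.sum_congr rfl; intro i _
          congr 2
          ring
        rw [this, mul_zero]
      have h2 : ∑ i ∈ Finset.Icc (1:ℤ) (M:ℤ),
          (κ * ((Gy (i+1) - Gy i) + (Gy (i-1) - Gy i))) = 0 := by
        rw [← Finset.mul_sum, Finset.sum_add_distrib, hshift 1]
        have := hshift (-1)
        have e : ∑ i ∈ Finset.Icc (1:ℤ) (M:ℤ), (Gy (i - 1) - Gy i)
            = ∑ i ∈ Finset.Icc (1:ℤ) (M:ℤ), (Gy (i + (-1)) - Gy i) := by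
          simp only [sub_eq_add_neg]
        rw [e, this, add_zero, mul_zero]
      rw [h1, h2, add_zero]
    calc ∑ i ∈ Finset.Icc (1:ℤ) (M:ℤ), deriv η (y i t) * R i t
        ≤ ∑ i ∈ Finset.Icc (1:ℤ) (M:ℤ),
          (((∑ j ∈ Finset.range N, (c j - c (j+1)) * (Gy (i + 1 + j) - Gy i))
            + κ * ((Gy (i+1) - Gy i) + (Gy (i-1) - Gy i))) / ℓ) :=
          Finset.sum_le_sum (fun i _ => hterm i)
      _ = 0 := hsum0
  -- conclude
  apply antitoneOn_of_deriv_nonpos (convex_Ici 0)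
  · intro t ht
    exact ((hD t ht).continuousAt).continuousWithinAt
  · intro t ht
    rw [interior_Ici] at ht
    exact ((hD t (le_of_lt ht)).differentiableAt).differentiableWithinAt
  · intro t ht
    rw [interior_Ici] at ht
    rw [(hD t (le_of_lt ht)).deriv]
    exact hkey t (le_of_lt ht)
end

section
/- Under the same hypotheses as the entropy decay result, the solution obeys the discrete maximum principle: for all t ≥ 0 and all i, min_j y_j(0) ≤ y_i(t) ≤ max_j y_j(0). -/
open Finset

lemma my_per {α : Type*} (g : ℤ → α) (M : ℕ) (h : ∀ i, g (i + (M:ℤ)) = g i) :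
    ∀ (n : ℤ) (i : ℤ), g (i + n * (M:ℤ)) = g i := by
  intro n
  induction n using Int.induction_on with
  | zero => simp
  | succ k ih =>
    intro i
    have h1 : i + ((k:ℤ) + 1) * M = (i + k * M) + M := by ring
    rw [h1, h, ih]
  | pred k ih =>
    intro i
    have h2 := h (i + (-(k:ℤ) - 1) * M)
    have h1 : i + (-(k:ℤ) - 1) * M + M = i + (-(k:ℤ)) * M := by ring
    rw [h1] at h2
    rw [← h2]
    exact ih i

lemma my_red {α : Type*} (g : ℤ → α) (M : ℕ) (hM : 1 ≤ M) (h : ∀ i, g (i + (M:ℤ)) = g i)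
    (i : ℤ) : g i = g (((i % (M:ℤ)).toNat : ℕ) : ℤ) := by
  have hM0 : (0:ℤ) < (M:ℤ) := by exact_mod_cast hM
  have h1 : (((i % (M:ℤ)).toNat : ℕ) : ℤ) = i % (M:ℤ) :=
    Int.toNat_of_nonneg (Int.emod_nonneg i hM0.ne')
  rw [h1]
  have h3 : i = i % (M:ℤ) + (i / (M:ℤ)) * (M:ℤ) := by
    rw [add_comm, mul_comm]
    exact (Int.mul_ediv_add_emod i M).symm
  conv_lhs => rw [h3]
  exact my_per g M h (i / (M:ℤ)) (i % (M:ℤ))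

lemma my_red_lt (M : ℕ) (hM : 1 ≤ M) (i : ℤ) : (i % (M:ℤ)).toNat < M := by
  have hM0 : (0:ℤ) < (M:ℤ) := by exact_mod_cast hM
  have := Int.emod_lt_of_pos i hM0
  omega

lemma my_shift_one (M : ℕ) (g : ℤ → ℝ) (hg : ∀ i, g (i + (M:ℤ)) = g i) :
    ∑ j ∈ range M, g ((j:ℤ) + 1) = ∑ j ∈ range M, g (j:ℤ) := by
  have h0 : ∑ j ∈ range M, g ((j:ℤ) + 1) = ∑ j ∈ range M, g ((j + 1 : ℕ) : ℤ) := by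
    apply Finset.sum_congr rfl; intro j _; norm_cast
  have h1 := Finset.sum_range_succ' (fun n : ℕ => g (n:ℤ)) M
  have h2 := Finset.sum_range_succ (fun n : ℕ => g (n:ℤ)) M
  have h3 : g ((M:ℕ):ℤ) = g ((0:ℕ):ℤ) := by
    have := hg 0
    simpa using this
  rw [h0]
  simp only [h2, h3] at h1
  push_cast at h1 ⊢
  linarith

lemma my_shift (M : ℕ) (g : ℤ → ℝ) (hg : ∀ i, g (i + (M:ℤ)) = g i) (k : ℤ) :
    ∑ j ∈ range M, g ((j:ℤ) + k) = ∑ j ∈ range M, g (j:ℤ) := by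
  induction k using Int.induction_on with
  | zero => simp
  | succ n ih =>
    have h2 := my_shift_one M (fun i => g (i + n))
      (fun i => by simpa [add_right_comm] using hg (i + n))
    have h3 : ∀ j : ℕ, (j:ℤ) + ((n:ℤ) + 1) = ((j:ℤ) + 1) + n := fun j => by ring
    calc ∑ j ∈ range M, g ((j:ℤ) + ((n:ℤ) + 1))
        = ∑ j ∈ range M, g (((j:ℤ) + 1) + n) := by
          apply Finset.sum_congr rfl; intro j _; rw [h3]
      _ = ∑ j ∈ range M, g ((j:ℤ) + n) := h2
      _ = ∑ j ∈ range M, g (j:ℤ) := ih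
  | pred n ih =>
    -- shift down lemma
    have hdown : ∑ j ∈ range M, g ((j:ℤ) + (-(n:ℤ))) = ∑ j ∈ range M, g ((j:ℤ) + (-(n:ℤ) - 1)) := by
      have h2 := my_shift_one M (fun i => g (i + (-(n:ℤ) - 1)))
        (fun i => by simpa [add_right_comm] using hg (i + (-(n:ℤ) - 1)))
      have h3 : ∀ j : ℕ, ((j:ℤ) + 1) + (-(n:ℤ) - 1) = (j:ℤ) + (-(n:ℤ)) := fun j => by ring
      calc ∑ j ∈ range M, g ((j:ℤ) + (-(n:ℤ)))
          = ∑ j ∈ range M, g (((j:ℤ) + 1) + (-(n:ℤ) - 1)) := by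
            apply Finset.sum_congr rfl; intro j _; rw [h3]
        _ = ∑ j ∈ range M, g ((j:ℤ) + (-(n:ℤ) - 1)) := h2
    rw [← hdown]
    exact ih

lemma my_pps (b x : ℝ) : HasDerivAt (fun u => max (u - b) 0 ^ 2) (2 * max (x - b) 0) x := by
  rcases lt_trichotomy x b with h | h | h
  · have hev : (fun u : ℝ => max (u - b) 0 ^ 2) =ᶠ[nhds x] fun _ => (0:ℝ) := by
      filter_upwards [Iio_mem_nhds h] with u hu
      rw [max_eq_right (sub_nonpos.2 (le_of_lt hu))]
      norm_num
    have h0 : HasDerivAt (fun _ : ℝ => (0:ℝ)) 0 x := hasDerivAt_const x 0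
    have := h0.congr_of_eventuallyEq hev
    simpa [max_eq_right (sub_nonpos.2 h.le)] using this
  · subst h
    have : (2 : ℝ) * max (x - x) 0 = 0 := by simp
    rw [this]
    rw [hasDerivAt_iff_tendsto_slope]
    have htend : Filter.Tendsto (fun u : ℝ => |u - x|) (nhdsWithin x {x}ᶜ) (nhds 0) := by
      have hc : Continuous (fun u : ℝ => |u - x|) := (continuous_id.sub continuous_const).abs
      have h5 := hc.tendsto x
      simp only [sub_self, abs_zero] at h5
      exact h5.mono_left nhdsWithin_le_nhds
    have hbound : ∀ u : ℝ, ‖slope (fun u => max (u - x) 0 ^ 2) x u‖ ≤ |u - x| := by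
      intro u
      rcases eq_or_ne u x with rfl | hu
      · simp [slope]
      · have hu' : u - x ≠ 0 := sub_ne_zero.2 hu
        have h1 : slope (fun u => max (u - x) 0 ^ 2) x u = max (u - x) 0 ^ 2 / (u - x) := by
          simp only [slope, max_eq_right (le_refl (0:ℝ)), sub_zero]
          norm_num
          ring
        rw [h1, norm_div, Real.norm_eq_abs, Real.norm_eq_abs]
        rw [div_le_iff₀ (abs_pos.2 hu')]
        have h2 : |max (u - x) 0 ^ 2| = max (u - x) 0 ^ 2 := abs_of_nonneg (by positivity)
        have h3 : max (u - x) 0 ≤ |u - x| := max_le (le_abs_self _) (abs_nonneg _)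
        have h4 : max (u - x) 0 ^ 2 ≤ |u - x| ^ 2 :=
          pow_le_pow_left₀ (le_max_right _ _) h3 2
        rw [h2, sq (|u - x|)] at *
        linarith
    exact squeeze_zero_norm hbound htend
  · have hd : HasDerivAt (fun u : ℝ => (u - b) ^ 2) (2 * (x - b)) x := by
      have := ((hasDerivAt_id x).sub_const b).fun_pow 2
      simpa using this
    have hev : (fun u : ℝ => (u - b) ^ 2) =ᶠ[nhds x] (fun u => max (u - b) 0 ^ 2) := by
      filter_upwards [Ioi_mem_nhds h] with u hu
      rw [max_eq_left (sub_nonneg.2 (le_of_lt hu))]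
    have := hd.congr_of_eventuallyEq hev.symm
    simpa [max_eq_left (sub_nonneg.2 h.le)] using this

lemma my_tele (N : ℕ) (c A : ℕ → ℝ) (hcN : c N = 0) :
    (∑ j ∈ range (N+1), c j * A (j+1)) - ∑ j ∈ range (N+1), c j * A j
      = ∑ k ∈ range N, (c k - c (k+1)) * (A (k+1) - A 0) := by
  have h1 : ∑ j ∈ range (N+1), c j * A (j+1) = ∑ j ∈ range N, c j * A (j+1) := by
    rw [Finset.sum_range_succ, hcN]; ring
  have h2 : ∑ j ∈ range (N+1), c j * A j = (∑ j ∈ range N, c (j+1) * A (j+1)) + c 0 * A 0 :=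
    Finset.sum_range_succ' (fun j => c j * A j) N
  have h3 : ∑ k ∈ range N, (c k - c (k+1)) = c 0 - c N := Finset.sum_range_sub' c N
  have h4 : ∀ k, (c k - c (k+1)) * (A (k+1) - A 0)
      = (c k * A (k+1) - c (k+1) * A (k+1)) - (c k - c (k+1)) * A 0 := fun k => by ring
  simp only [h4]
  rw [Finset.sum_sub_distrib, Finset.sum_sub_distrib, ← Finset.sum_mul, h3, hcN, h1, h2]
  ring

lemma my_gron (Kc t₀ : ℝ) (ht₀ : 0 ≤ t₀) (f f' : ℝ → ℝ)
    (hf : ∀ t ∈ Set.Icc 0 t₀, HasDerivAt f (f' t) t)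
    (hest : ∀ t ∈ Set.Icc 0 t₀, f' t ≤ Kc * f t)
    (h0 : f 0 ≤ 0) : f t₀ ≤ 0 := by
  set h : ℝ → ℝ := fun t => f t * Real.exp (-Kc * t) with hh
  have hd : ∀ t ∈ Set.Icc (0:ℝ) t₀,
      HasDerivAt h (f' t * Real.exp (-Kc*t) + f t * (Real.exp (-Kc*t) * (-Kc))) t := by
    intro t ht
    have he : HasDerivAt (fun t : ℝ => Real.exp (-Kc * t)) (Real.exp (-Kc * t) * (-Kc)) t := by
      have := (((hasDerivAt_id t).const_mul (-Kc)).exp)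
      simpa using this
    exact (hf t ht).mul he
  have anti : AntitoneOn h (Set.Icc 0 t₀) := by
    apply antitoneOn_of_deriv_nonpos (convex_Icc 0 t₀)
    · intro t ht; exact (hd t ht).continuousAt.continuousWithinAt
    · intro t ht
      exact ((hd t (interior_subset ht)).differentiableAt).differentiableWithinAt
    · intro t ht
      have ht' := interior_subset ht
      rw [(hd t ht').deriv]
      have h1 := hest t ht'
      have hexp : 0 < Real.exp (-Kc * t) := Real.exp_pos _
      nlinarith
  have h2 := anti (Set.left_mem_Icc.2 ht₀) (Set.right_mem_Icc.2 ht₀) ht₀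
  have hexp : 0 < Real.exp (-Kc * t₀) := Real.exp_pos _
  simp only [hh, mul_zero, neg_zero, Real.exp_zero, mul_one] at h2
  nlinarith

lemma my_lip (V : ℝ → ℝ) (hV : ContDiff ℝ 1 V) (R : ℝ) :
    ∃ L, 0 ≤ L ∧ ∀ a b : ℝ, |a| ≤ R → |b| ≤ R → a ≤ b → V b - V a ≤ L * (b - a) := by
  obtain ⟨L₀, hL₀⟩ := (isCompact_Icc (a := -R) (b := R)).exists_bound_of_continuousOn
    ((hV.continuous_deriv le_rfl).continuousOn)
  refine ⟨max L₀ 0, le_max_right _ _, fun a b ha hb hab => ?_⟩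
  rw [abs_le] at ha hb
  have hdiff : ∀ x ∈ Set.Icc a b, HasDerivWithinAt V (deriv V x) (Set.Icc a b) x := fun x _ =>
    ((hV.differentiable one_ne_zero) x).hasDerivAt.hasDerivWithinAt
  have bound : ∀ x ∈ Set.Ico a b, ‖deriv V x‖ ≤ max L₀ 0 := by
    intro x hx
    exact le_trans (hL₀ x ⟨by linarith [hx.1], by linarith [hx.2]⟩) (le_max_left _ _)
  have := norm_image_sub_le_of_norm_deriv_le_segment' hdiff bound b (Set.right_mem_Icc.2 hab)
  have h2 : V b - V a ≤ ‖V b - V a‖ := le_abs_self _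
  linarith
lemma my_key (M : ℕ) (hM : 1 ≤ M) (ℓ : ℝ) (hℓ : 0 < ℓ)
    (n : ℕ) (σ : ℕ → ℤ) (e : ℕ → ℝ) (he : ∀ k, 0 ≤ e k)
    (V : ℝ → ℝ) (hV : ContDiff ℝ 1 V) (hVmono : Monotone V)
    (y : ℤ → ℝ → ℝ) (hper : ∀ (i : ℤ) (t : ℝ), y (i + (M:ℤ)) t = y i t)
    (hode : ∀ (i : ℤ) (t : ℝ), 0 ≤ t → HasDerivAt (y i)
      ((∑ k ∈ range n, e k * (V (y (i + σ k) t) - V (y i t))) / ℓ) t)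
    (b : ℝ) (hb : ∀ j : ℤ, y j 0 ≤ b) :
    ∀ t : ℝ, 0 ≤ t → ∀ i : ℤ, y i t ≤ b := by
  intro t₀ ht₀ i
  -- reduce any index to a residue in range M
  have hred : ∀ (t : ℝ) (j : ℤ), y j t = y (((j % (M:ℤ)).toNat : ℕ) : ℤ) t :=
    fun t j => my_red (fun i => y i t) M hM (fun i => hper i t) j
  -- uniform bound R on [0, t₀]
  have hcont : ∀ j : ℤ, ContinuousOn (y j) (Set.Icc 0 t₀) :=
    fun j => fun t ht => ((hode j t ht.1).continuousAt).continuousWithinAt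
  obtain ⟨R, hR⟩ : ∃ R, ∀ (j : ℤ), ∀ t ∈ Set.Icc (0:ℝ) t₀, |y j t| ≤ R := by
    have hbnd : ∀ j : ℕ, ∃ C, ∀ t ∈ Set.Icc (0:ℝ) t₀, |y (j:ℤ) t| ≤ C := by
      intro j
      obtain ⟨C, hC⟩ := (isCompact_Icc (a := (0:ℝ)) (b := t₀)).exists_bound_of_continuousOn
        (hcont (j:ℤ))
      exact ⟨C, fun t ht => by simpa using hC t ht⟩
    choose C hC using hbnd
    have hne : (range M).Nonempty := nonempty_range_iff.2 (by omega)
    refine ⟨(range M).sup' hne C, fun j t ht => ?_⟩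
    rw [hred t j]
    exact le_trans (hC _ t ht)
      (Finset.le_sup' C (mem_range.2 (my_red_lt M hM j)))
  obtain ⟨L, hL0, hLip⟩ := my_lip V hV R
  -- the squared positive part and its sum over one period
  set w : ℤ → ℝ → ℝ := fun j t => max (y j t - b) 0 with hwdef
  have hw0 : ∀ j t, 0 ≤ w j t := fun j t => le_max_right _ _
  have hwper : ∀ (t : ℝ) (j : ℤ), w (j + (M:ℤ)) t = w j t := fun t j => by
    simp only [hwdef, hper]
  set f : ℝ → ℝ := fun t => ∑ j ∈ range M, (w (j:ℤ) t)^2 with hfdef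
  set f' : ℝ → ℝ := fun t => ∑ j ∈ range M, 2 * w (j:ℤ) t *
    ((∑ k ∈ range n, e k * (V (y ((j:ℤ) + σ k) t) - V (y (j:ℤ) t))) / ℓ) with hf'def
  have hfd : ∀ t ∈ Set.Icc (0:ℝ) t₀, HasDerivAt f (f' t) t := by
    intro t ht
    apply HasDerivAt.fun_sum
    intro j _
    have h1 := (my_pps b (y (j:ℤ) t)).comp t (hode (j:ℤ) t ht.1)
    exact h1
  set E : ℝ := ∑ k ∈ range n, e k with hEdef
  have hE0 : 0 ≤ E := Finset.sum_nonneg fun k _ => he k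
  set Kc : ℝ := 2 * L * E / ℓ with hKcdef
  -- key pointwise estimate
  have hest : ∀ t ∈ Set.Icc (0:ℝ) t₀, f' t ≤ Kc * f t := by
    intro t ht
    have hwb : ∀ j a : ℤ, w j t * (V (y a t) - V (y j t)) ≤ L * (w j t * w a t) := by
      intro j a
      rcases le_or_gt (y j t) b with h | h
      · have hz : w j t = 0 := max_eq_right (sub_nonpos.2 h)
        simp [hz]
      · have hwj : w j t = y j t - b := max_eq_left (by linarith)
        rcases le_or_gt (y a t) (y j t) with h2 | h2
        · have hv1 : V (y a t) - V (y j t) ≤ 0 := sub_nonpos.2 (hVmono h2)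
          have hv2 : w j t * (V (y a t) - V (y j t)) ≤ 0 :=
            mul_nonpos_of_nonneg_of_nonpos (hw0 j t) hv1
          have hv3 : 0 ≤ L * (w j t * w a t) :=
            mul_nonneg hL0 (mul_nonneg (hw0 j t) (hw0 a t))
          linarith
        · have hVd : V (y a t) - V (y j t) ≤ L * (y a t - y j t) :=
            hLip _ _ (hR j t ht) (hR a t ht) h2.le
          have hwa : w a t = y a t - b := max_eq_left (by linarith)
          have hwj0 : 0 ≤ w j t := hw0 j t
          have step1 : w j t * (V (y a t) - V (y j t)) ≤ w j t * (L * (y a t - y j t)) :=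
            mul_le_mul_of_nonneg_left hVd hwj0
          have step2 : y a t - y j t ≤ w a t := by rw [hwa]; linarith
          calc w j t * (V (y a t) - V (y j t))
              ≤ w j t * (L * (y a t - y j t)) := step1
            _ = L * (w j t * (y a t - y j t)) := by ring
            _ ≤ L * (w j t * w a t) :=
                mul_le_mul_of_nonneg_left (mul_le_mul_of_nonneg_left step2 hwj0) hL0
    -- termwise bound
    have hterm : ∀ j ∈ range M, 2 * w (j:ℤ) t *
        ((∑ k ∈ range n, e k * (V (y ((j:ℤ) + σ k) t) - V (y (j:ℤ) t))) / ℓ)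
        ≤ (L / ℓ) * ∑ k ∈ range n, e k * ((w (j:ℤ) t)^2 + (w ((j:ℤ) + σ k) t)^2) := by
      intro j _
      have hinner : w (j:ℤ) t * (∑ k ∈ range n, e k * (V (y ((j:ℤ) + σ k) t) - V (y (j:ℤ) t)))
          ≤ ∑ k ∈ range n, e k * (L * ((w (j:ℤ) t)^2 + (w ((j:ℤ) + σ k) t)^2) / 2) := by
        rw [Finset.mul_sum]
        apply Finset.sum_le_sum
        intro k _
        have h2 := hwb (j:ℤ) ((j:ℤ) + σ k)
        have hAM : w (j:ℤ) t * w ((j:ℤ) + σ k) t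
            ≤ ((w (j:ℤ) t)^2 + (w ((j:ℤ) + σ k) t)^2) / 2 := by
          nlinarith [sq_nonneg (w (j:ℤ) t - w ((j:ℤ) + σ k) t)]
        have h3 : w (j:ℤ) t * (e k * (V (y ((j:ℤ) + σ k) t) - V (y (j:ℤ) t)))
            = e k * (w (j:ℤ) t * (V (y ((j:ℤ) + σ k) t) - V (y (j:ℤ) t))) := by ring
        rw [h3]
        apply mul_le_mul_of_nonneg_left _ (he k)
        calc w (j:ℤ) t * (V (y ((j:ℤ) + σ k) t) - V (y (j:ℤ) t))
            ≤ L * (w (j:ℤ) t * w ((j:ℤ) + σ k) t) := h2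
          _ ≤ L * (((w (j:ℤ) t)^2 + (w ((j:ℤ) + σ k) t)^2) / 2) :=
              mul_le_mul_of_nonneg_left hAM hL0
          _ = L * ((w (j:ℤ) t)^2 + (w ((j:ℤ) + σ k) t)^2) / 2 := by ring
      have hstep : 2 * w (j:ℤ) t *
          ((∑ k ∈ range n, e k * (V (y ((j:ℤ) + σ k) t) - V (y (j:ℤ) t))) / ℓ)
          = (2 / ℓ) * (w (j:ℤ) t * (∑ k ∈ range n, e k * (V (y ((j:ℤ) + σ k) t) - V (y (j:ℤ) t)))) := by
        field_simp
      rw [hstep]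
      have h4 : (2 / ℓ) * (w (j:ℤ) t * (∑ k ∈ range n, e k * (V (y ((j:ℤ) + σ k) t) - V (y (j:ℤ) t))))
          ≤ (2 / ℓ) * ∑ k ∈ range n, e k * (L * ((w (j:ℤ) t)^2 + (w ((j:ℤ) + σ k) t)^2) / 2) :=
        mul_le_mul_of_nonneg_left hinner (by positivity)
      refine le_trans h4 (le_of_eq ?_)
      rw [Finset.mul_sum, Finset.mul_sum]
      apply Finset.sum_congr rfl
      intro k _
      field_simp
    have h5 : f' t ≤ ∑ j ∈ range M, (L / ℓ) *
        ∑ k ∈ range n, e k * ((w (j:ℤ) t)^2 + (w ((j:ℤ) + σ k) t)^2) :=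
      Finset.sum_le_sum hterm
    refine le_trans h5 (le_of_eq ?_)
    -- rearrange the double sum
    have hshift : ∀ k : ℕ, ∑ j ∈ range M, (w ((j:ℤ) + σ k) t)^2 = f t := by
      intro k
      exact my_shift M (fun i => (w i t)^2)
        (fun i => by show w (i + (M:ℤ)) t ^ 2 = w i t ^ 2; rw [hwper t i]) (σ k)
    calc ∑ j ∈ range M, (L / ℓ) * ∑ k ∈ range n, e k * ((w (j:ℤ) t)^2 + (w ((j:ℤ) + σ k) t)^2)
        = (L / ℓ) * ∑ k ∈ range n, e k *
            ∑ j ∈ range M, ((w (j:ℤ) t)^2 + (w ((j:ℤ) + σ k) t)^2) := by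
          rw [← Finset.mul_sum, Finset.sum_comm]
          congr 1
          apply Finset.sum_congr rfl
          intro k _
          rw [Finset.mul_sum]
      _ = (L / ℓ) * ∑ k ∈ range n, e k * (2 * f t) := by
          congr 1
          apply Finset.sum_congr rfl
          intro k _
          rw [Finset.sum_add_distrib, hshift k]
          simp only [hfdef]
          ring
      _ = Kc * f t := by
          rw [← Finset.sum_mul, ← hEdef, hKcdef]
          field_simp
  -- Gronwall
  have hf0 : f 0 ≤ 0 := by
    have : ∀ j ∈ range M, (w (j:ℤ) 0)^2 = 0 := by
      intro j _
      have : w (j:ℤ) 0 = 0 := max_eq_right (sub_nonpos.2 (hb (j:ℤ)))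
      rw [this]; ring
    rw [hfdef]
    simp only []
    rw [Finset.sum_congr rfl this]
    simp
  have hft₀ : f t₀ ≤ 0 := my_gron Kc t₀ ht₀ f f' hfd hest hf0
  -- conclude
  have hnn : ∀ j ∈ range M, 0 ≤ (w (j:ℤ) t₀)^2 := fun j _ => sq_nonneg _
  have hr := my_red_lt M hM i
  have hone : (w ((((i % (M:ℤ)).toNat : ℕ)):ℤ) t₀)^2 ≤ f t₀ :=
    Finset.single_le_sum hnn (mem_range.2 hr)
  have hzero : w ((((i % (M:ℤ)).toNat : ℕ)):ℤ) t₀ = 0 := by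
    have := le_trans hone hft₀
    nlinarith [hw0 ((((i % (M:ℤ)).toNat : ℕ)):ℤ) t₀]
  have : y ((((i % (M:ℤ)).toNat : ℕ)):ℤ) t₀ - b ≤ 0 := by
    have h6 : y ((((i % (M:ℤ)).toNat : ℕ)):ℤ) t₀ - b ≤ w ((((i % (M:ℤ)).toNat : ℕ)):ℤ) t₀ :=
      le_max_left _ _
    linarith [h6, hzero.le]
  rw [hred t₀ i]
  linarith
/-- Discrete maximum principle for the nonlocal Follow-the-Leader model:
`min_j y_j(0) ≤ y_i(t) ≤ max_j y_j(0)` for all `t ≥ 0` and all `i`. -/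
theorem stmt_6 (M : ℕ) (hM : 1 ≤ M) (N : ℕ) (hN : 1 ≤ N)
    (ℓ κ : ℝ) (hℓ : 0 < ℓ) (hκ : 0 ≤ κ)
    (c : ℕ → ℝ) (hcmono : ∀ j < N, c (j + 1) ≤ c j)
    (hcnonneg : ∀ j ≤ N, 0 ≤ c j) (hcN : c N = 0)
    (hcsum : ∑ j ∈ Finset.range (N + 1), c j = 1)
    (V : ℝ → ℝ) (hV : ContDiff ℝ 1 V) (hVmono : Monotone V)
    (y : ℤ → ℝ → ℝ)
    (hper : ∀ i : ℤ, ∀ t : ℝ, y (i + M) t = y i t)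
    (hode : ∀ i : ℤ, ∀ t : ℝ, 0 ≤ t →
      HasDerivAt (y i)
        (((∑ j ∈ Finset.range (N + 1), c j * V (y (i + 1 + j) t)) -
            (∑ j ∈ Finset.range (N + 1), c j * V (y (i + j) t)) +
          κ * (V (y (i + 1) t) - 2 * V (y i t) + V (y (i - 1) t))) / ℓ) t)
    :
    ∀ t : ℝ, 0 ≤ t → ∀ i : ℤ,
      sInf (Set.range fun j : ℤ => y j 0) ≤ y i t ∧
        y i t ≤ sSup (Set.range fun j : ℤ => y j 0) := by
  -- the range of initial values is a finite set
  have hrange : Set.range (fun j : ℤ => y j 0)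
      = ↑((Finset.range M).image fun j : ℕ => y (j:ℤ) 0) := by
    ext x
    constructor
    · rintro ⟨j, rfl⟩
      simp only [Finset.coe_image, Set.mem_image, Finset.mem_coe, Finset.mem_range]
      exact ⟨(j % (M:ℤ)).toNat, my_red_lt M hM j,
        (my_red (fun i => y i 0) M hM (fun i => hper i 0) j).symm⟩
    · intro hx
      simp only [Finset.coe_image, Set.mem_image, Finset.mem_coe, Finset.mem_range] at hx
      obtain ⟨j, _, hj⟩ := hx
      exact ⟨(j:ℤ), hj⟩
  have hfin : (Set.range fun j : ℤ => y j 0).Finite := by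
    rw [hrange]; exact Finset.finite_toSet _
  have hub : ∀ j : ℤ, y j 0 ≤ sSup (Set.range fun j : ℤ => y j 0) :=
    fun j => le_csSup hfin.bddAbove ⟨j, rfl⟩
  have hlb : ∀ j : ℤ, sInf (Set.range fun j : ℤ => y j 0) ≤ y j 0 :=
    fun j => csInf_le hfin.bddBelow ⟨j, rfl⟩
  -- coefficients of the rewritten scheme
  set σ : ℕ → ℤ := fun k => if k = N then -1 else (k:ℤ) + 1 with hσdef
  set e : ℕ → ℝ := fun k => if k = N then κ else
    if k < N then (c k - c (k+1)) + (if k = 0 then κ else 0) else 0 with hedef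
  have he : ∀ k, 0 ≤ e k := by
    intro k
    simp only [hedef]
    split
    · exact hκ
    · split
      · rename_i h1 h2
        have h3 := hcmono k h2
        have h4 : (0:ℝ) ≤ if k = 0 then κ else 0 := by
          split
          · exact hκ
          · exact le_refl 0
        linarith
      · exact le_refl 0
  -- the numerator identity
  have hnum : ∀ (i : ℤ) (t : ℝ),
      (∑ k ∈ range (N+1), e k * (V (y (i + σ k) t) - V (y i t)))
      = (∑ j ∈ Finset.range (N + 1), c j * V (y (i + 1 + j) t)) -
            (∑ j ∈ Finset.range (N + 1), c j * V (y (i + j) t)) +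
          κ * (V (y (i + 1) t) - 2 * V (y i t) + V (y (i - 1) t)) := by
    intro i t
    set u : ℕ → ℝ := fun j => V (y (i + (j:ℤ)) t) with hu
    have hgoal1 : ∑ j ∈ range (N+1), c j * V (y (i + 1 + (j:ℤ)) t)
        = ∑ j ∈ range (N+1), c j * u (j+1) := by
      apply Finset.sum_congr rfl
      intro j _
      have : i + 1 + (j:ℤ) = i + ((j+1 : ℕ):ℤ) := by push_cast; ring
      rw [this, hu]
    have hgoal2 : ∑ j ∈ range (N+1), c j * V (y (i + (j:ℤ)) t)
        = ∑ j ∈ range (N+1), c j * u j := by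
      apply Finset.sum_congr rfl
      intro j _
      rw [hu]
    have hV0 : V (y i t) = u 0 := by
      rw [hu]; norm_num
    have hV1 : V (y (i+1) t) = u 1 := by
      rw [hu]; norm_num
    have hVm : V (y (i - 1) t) = V (y (i + (-1:ℤ)) t) := by
      rw [sub_eq_add_neg]
    have key2 := my_tele N c u hcN
    have key1 : ∑ k ∈ range (N+1), e k * (V (y (i + σ k) t) - V (y i t))
        = (∑ k ∈ range N, (c k - c (k+1)) * (u (k+1) - u 0))
          + κ * (u 1 - u 0) + κ * (V (y (i + (-1:ℤ)) t) - u 0) := by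
      rw [Finset.sum_range_succ]
      have hNterm : e N * (V (y (i + σ N) t) - V (y i t))
          = κ * (V (y (i + (-1:ℤ)) t) - u 0) := by
        simp only [hedef, hσdef, if_pos rfl, hV0]
      rw [hNterm]
      have hsplit : ∀ k ∈ range N, e k * (V (y (i + σ k) t) - V (y i t))
          = (c k - c (k+1)) * (u (k+1) - u 0)
            + (if k = 0 then κ else 0) * (u (k+1) - u 0) := by
        intro k hk
        have hk' := mem_range.1 hk
        have hkN : k ≠ N := by omega
        have hσk : i + σ k = i + ((k+1:ℕ):ℤ) := by
          simp only [hσdef, if_neg hkN]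
          push_cast; ring
        rw [hσk, hV0]
        have huk : V (y (i + ((k+1:ℕ):ℤ)) t) = u (k+1) := by rw [hu]
        rw [huk]
        simp only [hedef, if_neg hkN, if_pos hk']
        ring
      rw [Finset.sum_congr rfl hsplit, Finset.sum_add_distrib]
      have hite : ∑ k ∈ range N, (if k = 0 then κ else 0) * (u (k+1) - u 0)
          = κ * (u 1 - u 0) := by
        rw [Finset.sum_eq_single 0]
        · norm_num
        · intro k _ hk0
          simp [hk0]
        · intro h0
          exact absurd (mem_range.2 (by omega)) h0
      rw [hite]
    rw [key1, hgoal1, hgoal2, hV1, hV0, hVm]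
    linear_combination -key2
  -- the ODE in canonical form
  have hode' : ∀ (i : ℤ) (t : ℝ), 0 ≤ t → HasDerivAt (y i)
      ((∑ k ∈ range (N+1), e k * (V (y (i + σ k) t) - V (y i t))) / ℓ) t := by
    intro i t ht
    rw [hnum i t]
    exact hode i t ht
  -- upper bound
  have hupper := my_key M hM ℓ hℓ (N+1) σ e he V hV hVmono y hper hode'
    (sSup (Set.range fun j : ℤ => y j 0)) hub
  -- lower bound via reflection
  set z : ℤ → ℝ → ℝ := fun j t => -(y j t) with hz
  set W : ℝ → ℝ := fun x => -V (-x) with hW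
  have hWc : ContDiff ℝ 1 W := (hV.comp (contDiff_id.neg)).neg
  have hWm : Monotone W := fun a b hab => neg_le_neg (hVmono (neg_le_neg hab))
  have hzper : ∀ (i : ℤ) (t : ℝ), z (i + (M:ℤ)) t = z i t := by
    intro i t
    simp only [hz, hper]
  have hzode : ∀ (i : ℤ) (t : ℝ), 0 ≤ t → HasDerivAt (z i)
      ((∑ k ∈ range (N+1), e k * (W (z (i + σ k) t) - W (z i t))) / ℓ) t := by
    intro i t ht
    have h1 := (hode' i t ht).neg
    have h2 : -((∑ k ∈ range (N+1), e k * (V (y (i + σ k) t) - V (y i t))) / ℓ)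
        = (∑ k ∈ range (N+1), e k * (W (z (i + σ k) t) - W (z i t))) / ℓ := by
      rw [← neg_div]
      congr 1
      rw [← Finset.sum_neg_distrib]
      apply Finset.sum_congr rfl
      intro k _
      simp only [hW, hz, neg_neg]
      ring
    rw [h2] at h1
    exact h1
  have hzb : ∀ j : ℤ, z j 0 ≤ -(sInf (Set.range fun j : ℤ => y j 0)) := by
    intro j
    simp only [hz]
    exact neg_le_neg (hlb j)
  have hlower := my_key M hM ℓ hℓ (N+1) σ e he W hWc hWm z hzper hzode
    (-(sInf (Set.range fun j : ℤ => y j 0))) hzb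
  intro t ht i
  constructor
  · have := hlower t ht i
    simp only [hz] at this
    linarith
  · exact hupper t ht i
end

section
/- Let y_i and z_i be two M-periodic C¹ solutions of ℓ ẏ_i = Δ₊(V̄_i) + κ Δ₊Δ₋V_i with the same coefficients (c_j decreasing, summing to 1, c_N = 0, κ ≥ 0, V strictly increasing and C¹). Then the discrete L¹ distance is non-increasing: Σ_{i=1}^M |y_i(t) − z_i(t)| ≤ Σ_{i=1}^M |y_i(0) − z_i(0)| for all t ≥ 0. -/
open Finset


private lemma abs_sign_le_one (r : ℝ) : |Real.sign r| ≤ 1 := by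
  rcases lt_trichotomy r 0 with h | h | h
  · rw [Real.sign_of_neg h]; norm_num
  · rw [h, Real.sign_zero]; norm_num
  · rw [Real.sign_of_pos h]; norm_num

private lemma shift_one (M : ℕ) (hM : 1 ≤ M) (f : ℤ → ℝ)
    (hf : ∀ i : ℤ, f (i + M) = f i) :
    ∑ i ∈ Icc (1:ℤ) (M:ℤ), f (i + 1) = ∑ i ∈ Icc (1:ℤ) (M:ℤ), f i := by
  have hM' : (1:ℤ) ≤ (M:ℤ) := by exact_mod_cast hM
  have hmap : ∑ i ∈ Icc (1:ℤ) (M:ℤ), f (i + 1)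
      = ∑ i ∈ Icc (2:ℤ) ((M:ℤ)+1), f i := by
    rw [show Icc (2:ℤ) ((M:ℤ)+1) = (Icc (1:ℤ) (M:ℤ)).map (addRightEmbedding 1) by
      rw [Finset.map_add_right_Icc]; norm_num]
    rw [Finset.sum_map]
    rfl
  have e2 : Icc (2:ℤ) ((M:ℤ)+1) = insert ((M:ℤ)+1) (Icc 2 (M:ℤ)) := by
    ext i; simp only [Finset.mem_Icc, Finset.mem_insert]; omega
  have e1 : Icc (1:ℤ) (M:ℤ) = insert 1 (Icc 2 (M:ℤ)) := by
    ext i; simp only [Finset.mem_Icc, Finset.mem_insert]; omega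
  rw [hmap, e2, e1, Finset.sum_insert (by simp), Finset.sum_insert (by simp)]
  have : f ((M:ℤ)+1) = f 1 := by
    rw [add_comm]; exact hf 1
  rw [this]

private lemma shift_nat (M : ℕ) (hM : 1 ≤ M) (f : ℤ → ℝ)
    (hf : ∀ i : ℤ, f (i + M) = f i) (k : ℕ) :
    ∑ i ∈ Icc (1:ℤ) (M:ℤ), f (i + k) = ∑ i ∈ Icc (1:ℤ) (M:ℤ), f i := by
  induction k with
  | zero => simp
  | succ k ih =>
      have h1 : ∑ i ∈ Icc (1:ℤ) (M:ℤ), f (i + (k+1:ℕ))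
          = ∑ i ∈ Icc (1:ℤ) (M:ℤ), (fun j => f (j + k)) (i + 1) := by
        apply Finset.sum_congr rfl
        intro i _
        congr 1
        push_cast
        ring
      rw [h1, shift_one M hM (fun j => f (j + k)) (fun i => by
        show f (i + (M:ℤ) + (k:ℤ)) = f (i + k)
        rw [show i + (M:ℤ) + (k:ℤ) = (i + k) + M by ring, hf]), ih]

private lemma core_ineq (M N : ℕ) (hM : 1 ≤ M) (κ : ℝ) (hκ : 0 ≤ κ)
    (c : ℕ → ℝ) (hcmono : ∀ j < N, c (j + 1) ≤ c j)
    (hcN : c N = 0)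
    (w σ : ℤ → ℝ) (hw : ∀ i : ℤ, w (i + M) = w i)
    (hσ : ∀ i, |σ i| ≤ 1) (hσw : ∀ i, σ i * w i = |w i|) :
    ∑ i ∈ Icc (1:ℤ) (M:ℤ),
      σ i * ((∑ j ∈ range (N + 1), c j * w (i + 1 + j)) -
        (∑ j ∈ range (N + 1), c j * w (i + j)) +
        κ * (w (i + 1) - 2 * w i + w (i - 1))) ≤ 0 := by
  have key : ∀ i k : ℤ, σ i * w k ≤ |w k| := by
    intro i k
    calc σ i * w k ≤ |σ i * w k| := le_abs_self _
      _ = |σ i| * |w k| := abs_mul _ _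
      _ ≤ 1 * |w k| := mul_le_mul_of_nonneg_right (hσ i) (abs_nonneg _)
      _ = |w k| := one_mul _
  have hd : ∀ j < N, 0 ≤ c j - c (j + 1) := fun j hj => sub_nonneg.2 (hcmono j hj)
  -- identity A
  have idA : ∀ i : ℤ,
      (∑ j ∈ range (N + 1), c j * w (i + 1 + j)) - (∑ j ∈ range (N + 1), c j * w (i + j))
        = (∑ j ∈ range N, (c j - c (j + 1)) * w (i + 1 + j)) - c 0 * w i := by
    intro i
    rw [Finset.sum_range_succ, hcN, Finset.sum_range_succ']
    have h2 : ∀ j ∈ range N, c (j + 1) * w (i + (j + 1 : ℕ)) = c (j + 1) * w (i + 1 + j) := by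
      intro j _
      congr 2
      push_cast; ring
    rw [Finset.sum_congr rfl h2]
    have h3 : ∑ x ∈ range N, c x * w (i + 1 + x) - ∑ x ∈ range N, c (x + 1) * w (i + 1 + x)
        = ∑ j ∈ range N, (c j - c (j + 1)) * w (i + 1 + j) := by
      rw [← Finset.sum_sub_distrib]
      exact Finset.sum_congr rfl fun j _ => by ring
    simp only [Nat.cast_zero, add_zero, zero_mul]
    linarith [h3]
  -- termwise bound
  have term : ∀ i : ℤ,
      σ i * ((∑ j ∈ range (N + 1), c j * w (i + 1 + j)) -
        (∑ j ∈ range (N + 1), c j * w (i + j)) +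
        κ * (w (i + 1) - 2 * w i + w (i - 1)))
      ≤ (∑ j ∈ range N, (c j - c (j + 1)) * |w (i + 1 + j)|) +
        κ * |w (i + 1)| + κ * |w (i - 1)| - (c 0 + 2 * κ) * |w i| := by
    intro i
    rw [idA i]
    have expand : σ i * ((∑ j ∈ range N, (c j - c (j + 1)) * w (i + 1 + j)) - c 0 * w i +
          κ * (w (i + 1) - 2 * w i + w (i - 1)))
        = σ i * (∑ j ∈ range N, (c j - c (j + 1)) * w (i + 1 + j))
          + κ * (σ i * w (i + 1)) + κ * (σ i * w (i - 1))
          - (c 0 + 2 * κ) * (σ i * w i) := by ring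
    have hsum : σ i * ∑ j ∈ range N, (c j - c (j + 1)) * w (i + 1 + j)
        = ∑ j ∈ range N, (c j - c (j + 1)) * (σ i * w (i + 1 + j)) := by
      rw [Finset.mul_sum]
      exact Finset.sum_congr rfl fun j _ => by ring
    rw [expand, hsum, hσw i]
    have hb1 : ∑ j ∈ range N, (c j - c (j + 1)) * (σ i * w (i + 1 + j))
        ≤ ∑ j ∈ range N, (c j - c (j + 1)) * |w (i + 1 + j)| :=
      Finset.sum_le_sum fun j hj =>
        mul_le_mul_of_nonneg_left (key i _) (hd j (Finset.mem_range.1 hj))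
    have hb2 := mul_le_mul_of_nonneg_left (key i (i + 1)) hκ
    have hb3 := mul_le_mul_of_nonneg_left (key i (i - 1)) hκ
    linarith
  -- sum the bound
  set S := ∑ i ∈ Icc (1:ℤ) (M:ℤ), |w i| with hS
  have habs : ∀ i : ℤ, |w (i + M)| = |w i| := fun i => by rw [hw]
  have shift : ∀ k : ℕ, ∑ i ∈ Icc (1:ℤ) (M:ℤ), |w (i + k)| = ∑ i ∈ Icc (1:ℤ) (M:ℤ), |w i| :=
    fun k => shift_nat M hM (fun i => |w i|) habs k
  have h1 : ∀ j : ℕ, ∑ i ∈ Icc (1:ℤ) (M:ℤ), |w (i + 1 + j)| = S := by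
    intro j
    rw [hS, ← shift (j + 1)]
    exact Finset.sum_congr rfl fun i _ => by congr 2; push_cast; ring
  have h2 : ∑ i ∈ Icc (1:ℤ) (M:ℤ), |w (i + 1)| = S := by
    rw [hS, ← shift 1]; norm_num
  have h3 : ∑ i ∈ Icc (1:ℤ) (M:ℤ), |w (i - 1)| = S := by
    rw [hS, ← shift (M - 1)]
    refine Finset.sum_congr rfl fun i _ => ?_
    have : i + ((M : ℕ) - 1 : ℕ) = (i - 1) + M := by
      have : (((M:ℕ) - 1 : ℕ) : ℤ) = (M : ℤ) - 1 := by
        rw [Nat.cast_sub hM]; norm_num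
      rw [this]; ring
    rw [this, habs]
  calc ∑ i ∈ Icc (1:ℤ) (M:ℤ),
      σ i * ((∑ j ∈ range (N + 1), c j * w (i + 1 + j)) -
        (∑ j ∈ range (N + 1), c j * w (i + j)) +
        κ * (w (i + 1) - 2 * w i + w (i - 1)))
      ≤ ∑ i ∈ Icc (1:ℤ) (M:ℤ),
        ((∑ j ∈ range N, (c j - c (j + 1)) * |w (i + 1 + j)|) +
          κ * |w (i + 1)| + κ * |w (i - 1)| - (c 0 + 2 * κ) * |w i|) :=
        Finset.sum_le_sum fun i _ => term i
    _ = 0 := by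
        rw [Finset.sum_sub_distrib, Finset.sum_add_distrib, Finset.sum_add_distrib,
          ← Finset.mul_sum, ← Finset.mul_sum, ← Finset.mul_sum, h2, h3]
        rw [Finset.sum_comm]
        have h4 : ∑ j ∈ range N, ∑ i ∈ Icc (1:ℤ) (M:ℤ), (c j - c (j + 1)) * |w (i + 1 + j)|
            = (c 0 - c N) * S := by
          rw [← Finset.sum_range_sub' c N]
          rw [Finset.sum_mul]
          refine Finset.sum_congr rfl fun j _ => ?_
          rw [← Finset.mul_sum, h1 j]
        rw [h4, hcN]
        ring


private lemma abs_hasDerivWithinAt {g : ℝ → ℝ} {t d : ℝ} (hg : HasDerivAt g d t) :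
    HasDerivWithinAt (fun s => |g s|)
      ((if g t = 0 then Real.sign d else Real.sign (g t)) * d) (Set.Ici t) t := by
  by_cases h0 : g t = 0
  · rw [if_pos h0]
    have hd : Real.sign d * d = |d| := by
      rcases lt_trichotomy d 0 with h | h | h
      · rw [Real.sign_of_neg h, abs_of_neg h]; ring
      · simp [h]
      · rw [Real.sign_of_pos h, abs_of_pos h]; ring
    rw [hd, hasDerivWithinAt_iff_tendsto_slope]
    have hslope : Filter.Tendsto (slope g t) (nhdsWithin t (Set.Ici t \ {t})) (nhds d) :=
      hasDerivWithinAt_iff_tendsto_slope.1 (hg.hasDerivWithinAt (s := Set.Ici t))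
    have habs : Filter.Tendsto (fun s => |slope g t s|)
        (nhdsWithin t (Set.Ici t \ {t})) (nhds |d|) := hslope.abs
    refine Filter.Tendsto.congr' ?_ habs
    filter_upwards [self_mem_nhdsWithin] with s hs
    have hst : 0 < s - t := by
      rcases hs with ⟨h1, h2⟩
      have hne : s ≠ t := h2
      exact sub_pos.2 (lt_of_le_of_ne h1 (Ne.symm hne))
    rw [slope_def_field, slope_def_field, h0, sub_zero, abs_div, abs_of_pos hst, abs_zero, sub_zero]
  · rw [if_neg h0]
    rcases lt_or_gt_of_ne h0 with hneg | hpos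
    · rw [Real.sign_of_neg hneg]
      have hev : ∀ᶠ s in nhds t, g s < 0 :=
        hg.continuousAt.preimage_mem_nhds (Iio_mem_nhds hneg)
      have hder : HasDerivAt (fun s => |g s|) (-d) t := by
        apply HasDerivAt.congr_of_eventuallyEq hg.neg
        filter_upwards [hev] with s hs
        exact abs_of_neg hs
      have := hder.hasDerivWithinAt (s := Set.Ici t)
      rw [neg_one_mul]; exact this
    · rw [Real.sign_of_pos hpos]
      have hev : ∀ᶠ s in nhds t, 0 < g s :=
        hg.continuousAt.preimage_mem_nhds (Ioi_mem_nhds hpos)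
      have hder : HasDerivAt (fun s => |g s|) d t := by
        apply HasDerivAt.congr_of_eventuallyEq hg
        filter_upwards [hev] with s hs
        exact abs_of_pos hs
      have := hder.hasDerivWithinAt (s := Set.Ici t)
      rw [one_mul]; exact this
/-- Discrete L¹-contraction for the nonlocal Follow-the-Leader model:
for two `M`-periodic solutions `y`, `z` of `ℓ ẏ_i = Δ₊(V̄_i) + κ Δ₊Δ₋ V_i`,
`∑_i |y_i(t) − z_i(t)| ≤ ∑_i |y_i(0) − z_i(0)|`. -/
theorem stmt_7 (M : ℕ) (hM : 1 ≤ M) (N : ℕ) (hN : 1 ≤ N)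
    (ℓ κ : ℝ) (hℓ : 0 < ℓ) (hκ : 0 ≤ κ)
    (c : ℕ → ℝ) (hcmono : ∀ j < N, c (j + 1) ≤ c j)
    (hcnonneg : ∀ j ≤ N, 0 ≤ c j) (hcN : c N = 0)
    (hcsum : ∑ j ∈ Finset.range (N + 1), c j = 1)
    (V : ℝ → ℝ) (hV : ContDiff ℝ 1 V) (hVmono : StrictMono V)
    (y z : ℤ → ℝ → ℝ)
    (hpery : ∀ i : ℤ, ∀ t : ℝ, y (i + M) t = y i t)
    (hperz : ∀ i : ℤ, ∀ t : ℝ, z (i + M) t = z i t)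
    (hodey : ∀ i : ℤ, ∀ t : ℝ, 0 ≤ t →
      HasDerivAt (y i)
        (((∑ j ∈ Finset.range (N + 1), c j * V (y (i + 1 + j) t)) -
            (∑ j ∈ Finset.range (N + 1), c j * V (y (i + j) t)) +
          κ * (V (y (i + 1) t) - 2 * V (y i t) + V (y (i - 1) t))) / ℓ) t)
    (hodez : ∀ i : ℤ, ∀ t : ℝ, 0 ≤ t →
      HasDerivAt (z i)
        (((∑ j ∈ Finset.range (N + 1), c j * V (z (i + 1 + j) t)) -
            (∑ j ∈ Finset.range (N + 1), c j * V (z (i + j) t)) +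
          κ * (V (z (i + 1) t) - 2 * V (z i t) + V (z (i - 1) t))) / ℓ) t) :
    ∀ t : ℝ, 0 ≤ t →
      ∑ i ∈ Finset.Icc (1:ℤ) (M:ℤ), |y i t - z i t| ≤
        ∑ i ∈ Finset.Icc (1:ℤ) (M:ℤ), |y i 0 - z i 0| := by
  intro t ht
  classical
  -- derivative of the difference
  set d : ℤ → ℝ → ℝ := fun i x =>
    (((∑ j ∈ Finset.range (N + 1), c j * V (y (i + 1 + j) x)) -
        (∑ j ∈ Finset.range (N + 1), c j * V (y (i + j) x)) +
      κ * (V (y (i + 1) x) - 2 * V (y i x) + V (y (i - 1) x))) / ℓ) -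
    (((∑ j ∈ Finset.range (N + 1), c j * V (z (i + 1 + j) x)) -
        (∑ j ∈ Finset.range (N + 1), c j * V (z (i + j) x)) +
      κ * (V (z (i + 1) x) - 2 * V (z i x) + V (z (i - 1) x))) / ℓ) with hd
  set σ : ℤ → ℝ → ℝ := fun i x =>
    if y i x - z i x = 0 then Real.sign (d i x) else Real.sign (y i x - z i x) with hσdef
  set F : ℝ → ℝ := fun s => ∑ i ∈ Finset.Icc (1:ℤ) (M:ℤ), |y i s - z i s| with hF
  set F' : ℝ → ℝ := fun x => ∑ i ∈ Finset.Icc (1:ℤ) (M:ℤ), σ i x * d i x with hF'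
  have hgderiv : ∀ (i : ℤ) (x : ℝ), 0 ≤ x →
      HasDerivAt (fun s => y i s - z i s) (d i x) x :=
    fun i x hx => (hodey i x hx).sub (hodez i x hx)
  have hf' : ∀ x ∈ Set.Ico (0:ℝ) t, HasDerivWithinAt F (F' x) (Set.Ici x) x := by
    intro x hx
    exact HasDerivWithinAt.fun_sum fun i _ => abs_hasDerivWithinAt (hgderiv i x hx.1)
  have hcont : ContinuousOn F (Set.Icc 0 t) := by
    apply continuousOn_finset_sum
    intro i _
    intro x hx
    exact ((hgderiv i x hx.1).continuousAt.abs).continuousWithinAt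
  have hbound : ∀ x ∈ Set.Ico (0:ℝ) t, F' x ≤ 0 := by
    intro x hx
    set w : ℤ → ℝ := fun i => V (y i x) - V (z i x) with hwdef
    have hper : ∀ i : ℤ, w (i + M) = w i := by
      intro i; simp only [hwdef, hpery, hperz]
    have hsig : ∀ i : ℤ, |σ i x| ≤ 1 := by
      intro i
      simp only [hσdef]
      split <;> exact abs_sign_le_one _
    have hsigw : ∀ i : ℤ, σ i x * w i = |w i| := by
      intro i
      simp only [hσdef, hwdef]
      by_cases h0 : y i x - z i x = 0
      · rw [if_pos h0]
        have : V (y i x) = V (z i x) := by rw [sub_eq_zero.1 h0]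
        rw [this]; simp
      · rw [if_neg h0]
        rcases lt_or_gt_of_ne h0 with hneg | hpos
        · have hw : V (y i x) - V (z i x) < 0 :=
            sub_neg.2 (hVmono (by linarith [sub_neg.1 hneg]))
          rw [Real.sign_of_neg hneg, abs_of_neg hw]; ring
        · have hw : 0 < V (y i x) - V (z i x) :=
            sub_pos.2 (hVmono (by linarith [sub_pos.1 hpos]))
          rw [Real.sign_of_pos hpos, abs_of_pos hw]; ring
    have hmain := core_ineq M N hM κ hκ c hcmono hcN w (fun i => σ i x) hper hsig hsigw
    have heq : F' x = (∑ i ∈ Finset.Icc (1:ℤ) (M:ℤ),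
        σ i x * ((∑ j ∈ Finset.range (N + 1), c j * w (i + 1 + j)) -
          (∑ j ∈ Finset.range (N + 1), c j * w (i + j)) +
          κ * (w (i + 1) - 2 * w i + w (i - 1)))) / ℓ := by
      rw [hF', Finset.sum_div]
      refine Finset.sum_congr rfl fun i _ => ?_
      have hdi : d i x = ((∑ j ∈ Finset.range (N + 1), c j * w (i + 1 + j)) -
          (∑ j ∈ Finset.range (N + 1), c j * w (i + j)) +
          κ * (w (i + 1) - 2 * w i + w (i - 1))) / ℓ := by
        simp only [hd]
        rw [div_sub_div_same]
        congr 1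
        have e1 : ∑ j ∈ Finset.range (N + 1), c j * V (y (i + 1 + j) x) -
            ∑ j ∈ Finset.range (N + 1), c j * V (z (i + 1 + j) x)
            = ∑ j ∈ Finset.range (N + 1), c j * w (i + 1 + j) := by
          rw [← Finset.sum_sub_distrib]
          exact Finset.sum_congr rfl fun j _ => by simp only [hwdef]; ring
        have e2 : ∑ j ∈ Finset.range (N + 1), c j * V (y (i + j) x) -
            ∑ j ∈ Finset.range (N + 1), c j * V (z (i + j) x)
            = ∑ j ∈ Finset.range (N + 1), c j * w (i + j) := by
          rw [← Finset.sum_sub_distrib]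
          exact Finset.sum_congr rfl fun j _ => by simp only [hwdef]; ring
        simp only [hwdef]
        linarith [e1, e2]
      rw [hdi, mul_div_assoc]
    rw [heq]
    exact div_nonpos_of_nonpos_of_nonneg hmain hℓ.le
  have key := image_le_of_deriv_right_le_deriv_boundary (f := F) (f' := F')
    (a := 0) (b := t) hcont hf' (B := fun _ => F 0) (B' := fun _ => 0)
    (le_refl _) continuousOn_const
    (fun x _ => (hasDerivAt_const x (F 0)).hasDerivWithinAt)
    hbound
  exact key (Set.mem_Icc.2 ⟨ht, le_refl t⟩)
end

section
/- Under the hypotheses of the L¹-contraction result (applied with z_i = y_{i−1}), the discrete total variation is non-increasing: Σ_{i=1}^M |y_i(t) − y_{i−1}(t)| ≤ Σ_{i=1}^M |y_i(0) − y_{i−1}(0)| for all t ≥ 0. -/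
open Finset Filter Topology

noncomputable def sg (r : ℝ) : ℝ := if 0 < r then 1 else if r < 0 then -1 else 0

lemma abs_sg_le (r : ℝ) : |sg r| ≤ 1 := by
  unfold sg; split_ifs <;> norm_num

lemma sg_mul_eq_abs {r s : ℝ} (h1 : 0 < r ↔ 0 < s) (h2 : r < 0 ↔ s < 0) :
    sg r * s = |s| := by
  unfold sg
  rcases lt_trichotomy r 0 with h | h | h
  · rw [if_neg (by linarith), if_pos h, abs_of_neg (h2.mp h)]; ring
  · have hs : s = 0 := by
      rcases lt_trichotomy s 0 with h' | h' | h'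
      · exact absurd (h2.mpr h') (by simp [h])
      · exact h'
      · exact absurd (h1.mpr h') (by simp [h])
    simp [hs]
  · rw [if_pos h, abs_of_pos (h1.mp h)]; ring

lemma sg_mul_self (r : ℝ) : sg r * r = |r| := sg_mul_eq_abs Iff.rfl Iff.rfl

lemma sum_shift_one (M : ℕ) (hM : 1 ≤ M) (g : ℤ → ℝ)
    (hg : ∀ i, g (i + M) = g i) :
    ∑ i ∈ Icc (1:ℤ) M, g (i + 1) = ∑ i ∈ Icc (1:ℤ) M, g i := by
  have h1 : Icc (1:ℤ) (M:ℤ) = insert 1 (Icc 2 (M:ℤ)) := by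
    ext x; simp only [mem_Icc, mem_insert]; omega
  have h2 : Icc (2:ℤ) ((M:ℤ)+1) = insert ((M:ℤ)+1) (Icc 2 (M:ℤ)) := by
    ext x; simp only [mem_Icc, mem_insert]; omega
  have h3 : ∑ i ∈ Icc (1:ℤ) M, g (i + 1) = ∑ i ∈ Icc (2:ℤ) ((M:ℤ)+1), g i := by
    rw [show (2:ℤ) = 1 + 1 from rfl, ← Finset.map_add_right_Icc (1:ℤ) (M:ℤ) 1,
      Finset.sum_map]
    rfl
  rw [h3, h2, h1, Finset.sum_insert (by simp), Finset.sum_insert (by simp)]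
  congr 1
  rw [show (M:ℤ) + 1 = 1 + (M:ℤ) by ring, hg 1]

lemma sum_shift (M : ℕ) (hM : 1 ≤ M) (g : ℤ → ℝ)
    (hg : ∀ i, g (i + M) = g i) (k : ℤ) :
    ∑ i ∈ Icc (1:ℤ) M, g (i + k) = ∑ i ∈ Icc (1:ℤ) M, g i := by
  induction k using Int.induction_on with
  | zero => simp
  | succ k ih =>
      have hper : ∀ i, (fun i => g (i + k)) (i + (M:ℤ)) = (fun i => g (i + k)) i := by
        intro i
        simp only
        rw [show i + (M:ℤ) + (k:ℤ) = i + (k:ℤ) + (M:ℤ) by ring, hg]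
      have h := sum_shift_one M hM (fun i => g (i + k)) hper
      calc ∑ i ∈ Icc (1:ℤ) M, g (i + ((k:ℤ)+1))
          = ∑ i ∈ Icc (1:ℤ) M, g (i + 1 + (k:ℤ)) := by
            apply Finset.sum_congr rfl; intro i _; congr 1; ring
        _ = ∑ i ∈ Icc (1:ℤ) M, g (i + (k:ℤ)) := h
        _ = _ := ih
  | pred k ih =>
      have hper : ∀ i, (fun i => g (i + (-(k:ℤ)-1))) (i + (M:ℤ))
          = (fun i => g (i + (-(k:ℤ)-1))) i := by
        intro i
        simp only
        rw [show i + (M:ℤ) + (-(k:ℤ)-1) = i + (-(k:ℤ)-1) + (M:ℤ) by ring, hg]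
      have h := sum_shift_one M hM (fun i => g (i + (-(k:ℤ)-1))) hper
      calc ∑ i ∈ Icc (1:ℤ) M, g (i + (-(k:ℤ)-1))
          = ∑ i ∈ Icc (1:ℤ) M, g (i + 1 + (-(k:ℤ)-1)) := h.symm
        _ = ∑ i ∈ Icc (1:ℤ) M, g (i + (-(k:ℤ))) := by
            apply Finset.sum_congr rfl; intro i _; congr 1; ring
        _ = _ := ih

lemma key_ineq (M N : ℕ) (hM : 1 ≤ M) (κ : ℝ) (hκ : 0 ≤ κ)
    (c : ℕ → ℝ) (hcmono : ∀ j < N, c (j + 1) ≤ c j) (hcN : c N = 0)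
    (v σ : ℤ → ℝ) (hv : ∀ i, v (i + M) = v i)
    (hσv : ∀ i, σ i * v i = |v i|) (hσ1 : ∀ i, |σ i| ≤ 1) :
    ∑ i ∈ Icc (1:ℤ) M, σ i *
      ((∑ j ∈ range (N + 1), c j * v (i + 1 + j)) -
        (∑ j ∈ range (N + 1), c j * v (i + j)) +
        κ * (v (i + 1) - 2 * v i + v (i - 1))) ≤ 0 := by
  set T := ∑ i ∈ Icc (1:ℤ) M, |v i| with hT
  have hshift : ∀ k : ℤ, ∑ i ∈ Icc (1:ℤ) M, |v (i + k)| = T := fun k =>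
    sum_shift M hM (fun i => |v i|) (fun i => congrArg (|·|) (hv i)) k
  have hbound : ∀ k : ℤ, ∑ i ∈ Icc (1:ℤ) M, σ i * v (i + k) ≤ T := by
    intro k
    rw [← hshift k]
    apply Finset.sum_le_sum
    intro i _
    calc σ i * v (i + k) ≤ |σ i * v (i + k)| := le_abs_self _
      _ = |σ i| * |v (i + k)| := abs_mul _ _
      _ ≤ 1 * |v (i + k)| := mul_le_mul_of_nonneg_right (hσ1 i) (abs_nonneg _)
      _ = |v (i + k)| := one_mul _
  have hexact : ∑ i ∈ Icc (1:ℤ) M, σ i * v i = T :=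
    Finset.sum_congr rfl (fun i _ => hσv i)
  have hterm : ∀ i ∈ Icc (1:ℤ) M,
      σ i * ((∑ j ∈ range (N + 1), c j * v (i + 1 + j)) -
        (∑ j ∈ range (N + 1), c j * v (i + j)) +
        κ * (v (i + 1) - 2 * v i + v (i - 1)))
      = (∑ j ∈ range N, (c j - c (j + 1)) * (σ i * v (i + 1 + j)))
        + κ * (σ i * v (i + 1)) + κ * (σ i * v (i - 1))
        + (-(2 * κ)) * (σ i * v i) + (-(c 0)) * (σ i * v i) := by
    intro i _
    have e1 : (∑ j ∈ range (N + 1), c j * v (i + 1 + j))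
        = ∑ j ∈ range N, c j * v (i + 1 + j) := by
      rw [Finset.sum_range_succ, hcN, zero_mul, add_zero]
    have e2 : (∑ j ∈ range (N + 1), c j * v (i + j))
        = (∑ j ∈ range N, c (j + 1) * v (i + 1 + j)) + c 0 * v i := by
      rw [Finset.sum_range_succ']
      congr 1
      · apply Finset.sum_congr rfl
        intro j _
        congr 2
        push_cast
        ring
      · norm_num
    have e3 : ∑ j ∈ range N, (c j - c (j + 1)) * (σ i * v (i + 1 + j))
        = σ i * ((∑ j ∈ range N, c j * v (i + 1 + j))
            - ∑ j ∈ range N, c (j + 1) * v (i + 1 + j)) := by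
      rw [← Finset.sum_sub_distrib, Finset.mul_sum]
      apply Finset.sum_congr rfl
      intro j _
      ring
    rw [e1, e2, e3]
    ring
  rw [Finset.sum_congr rfl hterm]
  simp only [Finset.sum_add_distrib, ← Finset.mul_sum]
  rw [Finset.sum_comm]
  have e4 : ∀ j ∈ range N, ∑ i ∈ Icc (1:ℤ) M, (c j - c (j + 1)) * (σ i * v (i + 1 + j))
      = (c j - c (j + 1)) * ∑ i ∈ Icc (1:ℤ) M, σ i * v (i + 1 + j) := by
    intro j _; rw [Finset.mul_sum]
  rw [Finset.sum_congr rfl e4]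
  have hP1 : ∑ j ∈ range N, (c j - c (j + 1)) * (∑ i ∈ Icc (1:ℤ) M, σ i * v (i + 1 + j))
      ≤ c 0 * T := by
    calc ∑ j ∈ range N, (c j - c (j + 1)) * (∑ i ∈ Icc (1:ℤ) M, σ i * v (i + 1 + j))
        ≤ ∑ j ∈ range N, (c j - c (j + 1)) * T := by
          apply Finset.sum_le_sum
          intro j hj
          apply mul_le_mul_of_nonneg_left _ (by
            have := hcmono j (Finset.mem_range.mp hj); linarith)
          have := hbound (1 + (j:ℤ))
          calc ∑ i ∈ Icc (1:ℤ) M, σ i * v (i + 1 + j)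
              = ∑ i ∈ Icc (1:ℤ) M, σ i * v (i + (1 + (j:ℤ))) := by
                apply Finset.sum_congr rfl; intro i _; congr 2; ring
            _ ≤ T := this
      _ = (∑ j ∈ range N, (c j - c (j + 1))) * T := by rw [Finset.sum_mul]
      _ = (c 0 - c N) * T := by rw [Finset.sum_range_sub' c N]
      _ = c 0 * T := by rw [hcN, sub_zero]
  have hP2 : ∑ i ∈ Icc (1:ℤ) M, σ i * v (i + 1) ≤ T := hbound 1
  have hP3 : ∑ i ∈ Icc (1:ℤ) M, σ i * v (i - 1) ≤ T := by
    have := hbound (-1)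
    calc ∑ i ∈ Icc (1:ℤ) M, σ i * v (i - 1)
        = ∑ i ∈ Icc (1:ℤ) M, σ i * v (i + (-1)) := by
          apply Finset.sum_congr rfl; intro i _; congr 2
      _ ≤ T := this
  have h2 := mul_le_mul_of_nonneg_left hP2 hκ
  have h3 := mul_le_mul_of_nonneg_left hP3 hκ
  rw [hexact]
  linarith

noncomputable def Dfun (N : ℕ) (κ ℓ : ℝ) (c : ℕ → ℝ) (V : ℝ → ℝ) (y : ℤ → ℝ → ℝ)
    (i : ℤ) (s : ℝ) : ℝ :=
  ((∑ j ∈ Finset.range (N + 1), c j * V (y (i + 1 + j) s)) -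
      (∑ j ∈ Finset.range (N + 1), c j * V (y (i + j) s)) +
    κ * (V (y (i + 1) s) - 2 * V (y i s) + V (y (i - 1) s))) / ℓ

noncomputable def DUfun (N : ℕ) (κ ℓ : ℝ) (c : ℕ → ℝ) (V : ℝ → ℝ) (y : ℤ → ℝ → ℝ)
    (i : ℤ) (s : ℝ) : ℝ :=
  Dfun N κ ℓ c V y i s - Dfun N κ ℓ c V y (i - 1) s

lemma ell_mul_DU (N : ℕ) (κ ℓ : ℝ) (hℓ : ℓ ≠ 0) (c : ℕ → ℝ) (V : ℝ → ℝ)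
    (y : ℤ → ℝ → ℝ) (i : ℤ) (s : ℝ) (v : ℤ → ℝ)
    (hv : ∀ k, v k = V (y k s) - V (y (k - 1) s)) :
    ℓ * DUfun N κ ℓ c V y i s =
      (∑ j ∈ Finset.range (N + 1), c j * v (i + 1 + j)) -
        (∑ j ∈ Finset.range (N + 1), c j * v (i + j)) +
        κ * (v (i + 1) - 2 * v i + v (i - 1)) := by
  have e1 : ∀ k : ℤ, (∑ j ∈ Finset.range (N + 1), c j * v (k + j))
      = (∑ j ∈ Finset.range (N + 1), c j * V (y (k + j) s)) -
        (∑ j ∈ Finset.range (N + 1), c j * V (y (k - 1 + j) s)) := by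
    intro k
    rw [← Finset.sum_sub_distrib]
    apply Finset.sum_congr rfl
    intro j _
    rw [hv, show k + (j:ℤ) - 1 = k - 1 + j by ring]
    ring
  have e1' : (∑ j ∈ Finset.range (N + 1), c j * v (i + 1 + j))
      = (∑ j ∈ Finset.range (N + 1), c j * V (y (i + 1 + j) s)) -
        (∑ j ∈ Finset.range (N + 1), c j * V (y (i + j) s)) := by
    rw [e1 (i + 1)]
    congr 1
    apply Finset.sum_congr rfl
    intro j _
    congr 3
    ring
  unfold DUfun Dfun
  rw [e1', e1 i, hv (i+1), hv i, hv (i-1),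
    show i + 1 - 1 = i by ring, show i - 1 + 1 = i by ring]
  field_simp
  ring

/-- Discrete BV bound for the nonlocal Follow-the-Leader model: for an
`M`-periodic solution of `ℓ ẏ_i = Δ₊(V̄_i) + κ Δ₊Δ₋ V_i`, the discrete total
variation `∑_i |y_i(t) − y_{i−1}(t)|` is non-increasing. -/
theorem stmt_8 (M : ℕ) (hM : 1 ≤ M) (N : ℕ) (hN : 1 ≤ N)
    (ℓ κ : ℝ) (hℓ : 0 < ℓ) (hκ : 0 ≤ κ)
    (c : ℕ → ℝ) (hcmono : ∀ j < N, c (j + 1) ≤ c j)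
    (hcnonneg : ∀ j ≤ N, 0 ≤ c j) (hcN : c N = 0)
    (hcsum : ∑ j ∈ Finset.range (N + 1), c j = 1)
    (V : ℝ → ℝ) (hV : ContDiff ℝ 1 V) (hVmono : StrictMono V)
    (y : ℤ → ℝ → ℝ)
    (hper : ∀ i : ℤ, ∀ t : ℝ, y (i + M) t = y i t)
    (hode : ∀ i : ℤ, ∀ t : ℝ, 0 ≤ t →
      HasDerivAt (y i)
        (((∑ j ∈ Finset.range (N + 1), c j * V (y (i + 1 + j) t)) -
            (∑ j ∈ Finset.range (N + 1), c j * V (y (i + j) t)) +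
          κ * (V (y (i + 1) t) - 2 * V (y i t) + V (y (i - 1) t))) / ℓ) t) :
    ∀ t : ℝ, 0 ≤ t →
      ∑ i ∈ Finset.Icc (1:ℤ) (M:ℤ), |y i t - y (i - 1) t| ≤
        ∑ i ∈ Finset.Icc (1:ℤ) (M:ℤ), |y i 0 - y (i - 1) 0| := by
  intro t ht
  have hdu : ∀ i : ℤ, ∀ s : ℝ, 0 ≤ s →
      HasDerivAt (fun r => y i r - y (i - 1) r) (DUfun N κ ℓ c V y i s) s := by
    intro i s hs
    exact (hode i s hs).sub (hode (i - 1) s hs)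
  set F : ℝ → ℝ := fun s => ∑ i ∈ Finset.Icc (1:ℤ) (M:ℤ), |y i s - y (i - 1) s| with hF
  set f' : ℝ → ℝ := fun s => ∑ i ∈ Finset.Icc (1:ℤ) (M:ℤ),
      (if y i s - y (i - 1) s = 0 then sg (DUfun N κ ℓ c V y i s)
        else sg (y i s - y (i - 1) s)) * DUfun N κ ℓ c V y i s with hf'
  -- continuity
  have hcont : ContinuousOn F (Set.Icc 0 t) := by
    apply continuousOn_finset_sum
    intro i _
    have h1 : ContinuousOn (fun s => y i s - y (i - 1) s) (Set.Icc 0 t) := by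
      intro s hs
      exact ((hdu i s hs.1).continuousAt).continuousWithinAt
    exact h1.abs
  -- the key bound f' x ≤ 0 for x ≥ 0
  have hbound : ∀ x : ℝ, 0 ≤ x → f' x ≤ 0 := by
    intro x hx
    set v : ℤ → ℝ := fun k => V (y k x) - V (y (k - 1) x) with hvdef
    set σ : ℤ → ℝ := fun i => if y i x - y (i - 1) x = 0 then sg (DUfun N κ ℓ c V y i x)
        else sg (y i x - y (i - 1) x) with hσdef
    have hvper : ∀ i, v (i + M) = v i := by
      intro i
      simp only [hvdef]
      rw [show i + (M:ℤ) - 1 = i - 1 + M by ring, hper i, hper (i - 1)]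
    have hσv : ∀ i, σ i * v i = |v i| := by
      intro i
      by_cases h : y i x - y (i - 1) x = 0
      · have hy : y i x = y (i - 1) x := by linarith [sub_eq_zero.mp h]
        have hv0 : v i = 0 := by simp only [hvdef]; rw [hy, sub_self]
        simp [hv0]
      · simp only [hσdef, if_neg h]
        apply sg_mul_eq_abs
        · simp only [hvdef]
          constructor
          · intro hp
            have : y (i - 1) x < y i x := by linarith
            have := hVmono this
            linarith
          · intro hp
            have : V (y (i - 1) x) < V (y i x) := by linarith
            have := hVmono.lt_iff_lt.mp this
            linarith
        · simp only [hvdef]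
          constructor
          · intro hp
            have : y i x < y (i - 1) x := by linarith
            have := hVmono this
            linarith
          · intro hp
            have : V (y i x) < V (y (i - 1) x) := by linarith
            have := hVmono.lt_iff_lt.mp this
            linarith
    have hσ1 : ∀ i, |σ i| ≤ 1 := by
      intro i
      simp only [hσdef]
      split_ifs <;> exact abs_sg_le _
    have hmain := key_ineq M N hM κ hκ c hcmono hcN v σ hvper hσv hσ1
    have h2 : ∑ i ∈ Finset.Icc (1:ℤ) (M:ℤ), σ i * (ℓ * DUfun N κ ℓ c V y i x) ≤ 0 := by
      calc ∑ i ∈ Finset.Icc (1:ℤ) (M:ℤ), σ i * (ℓ * DUfun N κ ℓ c V y i x)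
          = ∑ i ∈ Finset.Icc (1:ℤ) (M:ℤ), σ i *
            ((∑ j ∈ Finset.range (N + 1), c j * v (i + 1 + j)) -
              (∑ j ∈ Finset.range (N + 1), c j * v (i + j)) +
              κ * (v (i + 1) - 2 * v i + v (i - 1))) := by
            apply Finset.sum_congr rfl
            intro i _
            rw [ell_mul_DU N κ ℓ hℓ.ne' c V y i x v (fun k => rfl)]
        _ ≤ 0 := hmain
    have h3 : ℓ * f' x = ∑ i ∈ Finset.Icc (1:ℤ) (M:ℤ), σ i * (ℓ * DUfun N κ ℓ c V y i x) := by
      simp only [hf', Finset.mul_sum]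
      apply Finset.sum_congr rfl
      intro i _
      simp only [hσdef]
      ring
    nlinarith [h2, h3, hℓ]
  -- the Dini derivative condition
  have hdini : ∀ x ∈ Set.Ico (0:ℝ) t, ∀ r, f' x < r →
      ∃ᶠ z in 𝓝[>] x, (z - x)⁻¹ * (F z - F x) < r := by
    intro x hx r hr
    have htend : Tendsto (fun z => (z - x)⁻¹ * (F z - F x)) (𝓝[>] x) (𝓝 (f' x)) := by
      have heq : ∀ z, (z - x)⁻¹ * (F z - F x)
          = ∑ i ∈ Finset.Icc (1:ℤ) (M:ℤ),
            (z - x)⁻¹ * (|y i z - y (i - 1) z| - |y i x - y (i - 1) x|) := by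
        intro z
        simp only [hF]
        rw [← Finset.sum_sub_distrib, Finset.mul_sum]
      rw [show (fun z => (z - x)⁻¹ * (F z - F x)) = fun z =>
        ∑ i ∈ Finset.Icc (1:ℤ) (M:ℤ),
          (z - x)⁻¹ * (|y i z - y (i - 1) z| - |y i x - y (i - 1) x|) from funext heq, hf']
      apply tendsto_finset_sum
      intro i _
      have hslope : Tendsto (fun z => (z - x)⁻¹ * ((y i z - y (i - 1) z) - (y i x - y (i - 1) x)))
          (𝓝[>] x) (𝓝 (DUfun N κ ℓ c V y i x)) := by
        have h1 := hdu i x hx.1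
        rw [hasDerivAt_iff_tendsto_slope] at h1
        have h2 := h1.mono_left (nhdsWithin_mono x
          (fun z (hz : z ∈ Set.Ioi x) => (ne_of_gt hz : z ≠ x)))
        apply h2.congr
        intro z
        rw [slope_def_field, div_eq_inv_mul]
      by_cases h0 : y i x - y (i - 1) x = 0
      · rw [if_pos h0, sg_mul_self]
        apply (hslope.abs).congr'
        filter_upwards [self_mem_nhdsWithin] with z hz
        have hzx : (0:ℝ) < z - x := sub_pos.mpr hz
        rw [h0, sub_zero, abs_zero, sub_zero, abs_mul, abs_of_pos (inv_pos.mpr hzx)]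
      · rw [if_neg h0]
        have hc : ContinuousAt (fun s => y i s - y (i - 1) s) x := (hdu i x hx.1).continuousAt
        rcases Ne.lt_or_gt h0 with hneg | hpos
        · have hsg : sg (y i x - y (i - 1) x) = -1 := by
            unfold sg
            rw [if_neg (by linarith), if_pos hneg]
          rw [hsg, neg_one_mul]
          have hev : ∀ᶠ z in 𝓝[>] x, y i z - y (i - 1) z < 0 :=
            (hc.eventually (eventually_lt_nhds hneg)).filter_mono nhdsWithin_le_nhds
          apply (hslope.neg).congr'
          filter_upwards [hev] with z hz
          rw [abs_of_neg hz, abs_of_neg hneg]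
          ring
        · have hsg : sg (y i x - y (i - 1) x) = 1 := by
            unfold sg
            rw [if_pos hpos]
          rw [hsg, one_mul]
          have hev : ∀ᶠ z in 𝓝[>] x, 0 < y i z - y (i - 1) z :=
            (hc.eventually (eventually_gt_nhds hpos)).filter_mono nhdsWithin_le_nhds
          apply hslope.congr'
          filter_upwards [hev] with z hz
          rw [abs_of_pos hz, abs_of_pos hpos]
    exact (htend.eventually_lt_const hr).frequently
  have hgron := le_gronwallBound_of_liminf_deriv_right_le (f' := f') (K := 0) (ε := 0)
    hcont hdini (le_refl (F 0))
    (fun x hx => by simpa using hbound x hx.1) t ⟨ht, le_refl t⟩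
  have : gronwallBound (F 0) 0 0 (t - 0) = F 0 := by
    rw [gronwallBound_K0]
    ring
  rw [this] at hgron
  exact hgron
end

section
/- Let x_i(t) solve the Follow-the-Leader system ẋ_i = Σ_{j=0}^N c_j v(ℓ/(x_{i+j+1} − x_{i+j})) + κ(v(ℓ/(x_{i+1} − x_i)) − v(ℓ/(x_i − x_{i−1}))), with x_{i+1}(0) − x_i(0) > ℓ for all i and periodicity x_{i+M}(t) = x_i(t) + P. If v : [0,1] → [0,1] is nonincreasing, Lipschitz, v(0)=1, v(1)=0, then the system is collision-free: x_{i+1}(t) − x_i(t) ≥ ℓ for all t ≥ 0 and all i. More precisely x_{i+1}(t) − x_i(t) ≥ min_j (x_{j+1}(0) − x_j(0)). -/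
open Finset

lemma abel_identity (c a : ℕ → ℝ) (n : ℕ) :
    ∑ j ∈ range n, c j * (a (j + 1) - a j)
      = ∑ j ∈ range n, (c j - c (j + 1)) * (a (j + 1) - a 0) + c n * (a n - a 0) := by
  induction n with
  | zero => simp
  | succ n ih => rw [Finset.sum_range_succ, Finset.sum_range_succ, ih]; ring

lemma abel_nonneg (c a : ℕ → ℝ) (N : ℕ)
    (hcmono : ∀ j < N, c (j + 1) ≤ c j) (hcN : c N = 0)
    (ha : ∀ j ≤ N + 1, a 0 ≤ a j) :
    0 ≤ ∑ j ∈ range (N + 1), c j * (a (j + 1) - a j) := by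
  rw [Finset.sum_range_succ, abel_identity, hcN]
  have : 0 ≤ ∑ j ∈ range N, (c j - c (j + 1)) * (a (j + 1) - a 0) := by
    apply Finset.sum_nonneg
    intro j hj
    have hj' := Finset.mem_range.mp hj
    have := hcmono j hj'
    have := ha (j + 1) (by omega)
    nlinarith
  nlinarith

lemma contOn_sup' {ι : Type*} (s : Finset ι) (hs : s.Nonempty) (F : ι → ℝ → ℝ) (U : Set ℝ)
    (h : ∀ i ∈ s, ContinuousOn (F i) U) :
    ContinuousOn (fun t => s.sup' hs (fun i => F i t)) U := by
  intro t ht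
  exact Filter.Tendsto.finset_sup'_nhds_apply hs (fun i hi => h i hi t ht)

lemma min_principle (M : ℕ) (hM : 0 < M) (G D : ℕ → ℝ → ℝ)
    (hG : ∀ k < M, ∀ t : ℝ, 0 ≤ t → HasDerivAt (G k) (D k t) t)
    (ℓ m0 : ℝ) (hm0 : ℓ < m0)
    (hinit : ∀ k < M, m0 ≤ G k 0)
    (hpos : ∀ t : ℝ, 0 ≤ t → ∀ k < M, ℓ < G k t → (∀ j < M, G k t ≤ G j t) → 0 ≤ D k t) :
    ∀ t : ℝ, 0 ≤ t → ∀ k < M, m0 ≤ G k t := by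
  have hne : (range M).Nonempty := nonempty_range_iff.mpr (by omega)
  set f : ℝ → ℝ := fun t => (range M).sup' hne (fun k => -(G k t)) with hfdef
  have hle_f : ∀ (k) (t : ℝ), k < M → -(G k t) ≤ f t := fun k t hk =>
    Finset.le_sup' (fun k => -(G k t)) (mem_range.mpr hk)
  have key : ∀ b : ℝ, 0 ≤ b → ∀ ε : ℝ, 0 < ε → ε * (1 + b) < m0 - ℓ →
      ∀ t ∈ Set.Icc (0:ℝ) b, ∀ k < M, m0 - ε * (1 + t) ≤ G k t := by
    intro b hb ε hε hεb
    set f' : ℝ → ℝ := fun t => (range M).sup' hne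
      (fun k => if -(G k t) = f t then -(D k t) else -|D k t| - 1) with hf'def
    set B : ℝ → ℝ := fun t => -m0 + ε * (1 + t) with hBdef
    have hmain : ∀ ⦃y : ℝ⦄, y ∈ Set.Icc 0 b → f y ≤ B y := by
      refine image_le_of_liminf_slope_right_lt_deriv_boundary (f' := f')
        (B' := fun _ => ε) ?_ ?_ ?_ ?_ ?_
      · -- continuity of f
        rw [hfdef]
        exact contOn_sup' _ hne (fun k t => -(G k t)) _ (fun k hk => fun t ht =>
          ((hG k (mem_range.mp hk) t ht.1).continuousAt.neg).continuousWithinAt)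
      · -- slope condition
        intro y hy r hr
        set r' : ℝ := (f' y + r) / 2 with hr'def
        have hr1 : f' y < r' := by rw [hr'def]; linarith
        have hr2 : r' < r := by rw [hr'def]; linarith
        have hall : ∀ᶠ z in nhdsWithin y (Set.Ioi y),
            ∀ k ∈ range M, -(G k z) ≤ f y + r' * (z - y) := by
          rw [Filter.eventually_all_finset]
          intro k hk
          have hkM := mem_range.mp hk
          by_cases hact : -(G k y) = f y
          · -- active index
            have hDle : -(D k y) ≤ f' y := by
              have := Finset.le_sup' (f := fun k =>
                if -(G k y) = f y then -(D k y) else -|D k y| - 1) hk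
              rw [if_pos hact] at this
              exact this
            have hd : HasDerivAt (fun z => -(G k z)) (-(D k y)) y := (hG k hkM y hy.1).neg
            have htend := hasDerivAt_iff_tendsto_slope.mp hd
            have h1 : ∀ᶠ z in nhdsWithin y {y}ᶜ,
                slope (fun z => -(G k z)) y z < r' :=
              htend.eventually_lt_const (lt_of_le_of_lt hDle hr1)
            have h2 : ∀ᶠ z in nhdsWithin y (Set.Ioi y),
                slope (fun z => -(G k z)) y z < r' :=
              h1.filter_mono (nhdsWithin_mono y (s := Set.Ioi y) (t := {y}ᶜ)
                (fun z hz => by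
                  simp only [Set.mem_compl_singleton_iff]
                  exact ne_of_gt hz))
            filter_upwards [h2, self_mem_nhdsWithin] with z hz1 hz2
            rw [slope_def_field] at hz1
            have hzy : (0:ℝ) < z - y := sub_pos.mpr hz2
            rw [div_lt_iff₀ hzy] at hz1
            rw [← hact]
            linarith
          · -- inactive index
            have hklt : -(G k y) < f y := lt_of_le_of_ne (hle_f k y hkM) hact
            have hc1 : Filter.Tendsto (fun z => -(G k z)) (nhds y) (nhds (-(G k y))) :=
              ((hG k hkM y hy.1).continuousAt.neg)
            have hc2 : Filter.Tendsto (fun z : ℝ => f y + r' * (z - y)) (nhds y)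
                (nhds (f y)) := by
              have : Filter.Tendsto (fun z : ℝ => f y + r' * (z - y)) (nhds y)
                  (nhds (f y + r' * (y - y))) := by
                apply Filter.Tendsto.add tendsto_const_nhds
                exact (tendsto_const_nhds.mul ((continuous_id.sub continuous_const).tendsto y))
              simpa using this
            have := (hc1.eventually_lt hc2 hklt).filter_mono
              (nhdsWithin_le_nhds (s := Set.Ioi y))
            exact this.mono (fun z hz => hz.le)
        have hev : ∀ᶠ z in nhdsWithin y (Set.Ioi y), slope f y z < r := by
          filter_upwards [hall, self_mem_nhdsWithin] with z hz hzy
          have hzy' : (0:ℝ) < z - y := sub_pos.mpr hzy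
          have hfz : f z ≤ f y + r' * (z - y) :=
            Finset.sup'_le hne _ (fun k hk => hz k hk)
          refine lt_of_le_of_lt ?_ hr2
          rw [slope_def_field, div_le_iff₀ hzy']
          linarith
        exact hev.frequently
      · -- initial condition
        rw [hfdef, hBdef]
        simp only
        apply Finset.sup'_le
        intro k hk
        have := hinit k (mem_range.mp hk)
        nlinarith
      · -- derivative of B
        intro y
        rw [hBdef]
        have : HasDerivAt (fun t : ℝ => -m0 + ε * (1 + t)) (ε * 1) y := by
          exact (((hasDerivAt_id y).const_add 1).const_mul ε).const_add (-m0)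
        simpa using this
      · -- bound at contact points
        intro y hy hfy
        rw [hf'def]
        simp only
        rw [Finset.sup'_lt_iff]
        intro k hk
        by_cases hact : -(G k y) = f y
        · rw [if_pos hact]
          have hBy : B y = -m0 + ε * (1 + y) := rfl
          have hGk : G k y = m0 - ε * (1 + y) := by
            have := hact
            rw [hfy, hBy] at this
            linarith
          have hεy : ε * (1 + y) ≤ ε * (1 + b) := by
            have := hy.2
            nlinarith [hy.1]
          have hℓk : ℓ < G k y := by rw [hGk]; linarith
          have hminp : ∀ j < M, G k y ≤ G j y := by
            intro j hj
            have h1 := hle_f j y hj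
            rw [hfy, hBy] at h1
            rw [hGk]; linarith
          have := hpos y hy.1 k (mem_range.mp hk) hℓk hminp
          linarith
        · rw [if_neg hact]
          have := abs_nonneg (D k y)
          linarith
    intro t ht k hk
    have h1 := hle_f k t hk
    have h2 := hmain ht
    have hBt : B t = -m0 + ε * (1 + t) := rfl
    rw [hBt] at h2
    linarith
  -- take ε → 0
  intro t ht k hk
  by_contra hcon
  push_neg at hcon
  set δ : ℝ := m0 - G k t with hδdef
  have hδ : 0 < δ := by rw [hδdef]; linarith
  have h1t : (0:ℝ) < 1 + t := by linarith
  set ε : ℝ := min (δ / (2 * (1 + t))) ((m0 - ℓ) / (2 * (1 + t))) with hεdef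
  have hε : 0 < ε := lt_min (div_pos hδ (by positivity)) (div_pos (by linarith) (by positivity))
  have hεb : ε * (1 + t) < m0 - ℓ := by
    have h2 := min_le_right (δ / (2 * (1 + t))) ((m0 - ℓ) / (2 * (1 + t)))
    have h3 : ε * (1 + t) ≤ ((m0 - ℓ) / (2 * (1 + t))) * (1 + t) := by
      apply mul_le_mul_of_nonneg_right _ h1t.le
      rw [hεdef]; exact h2
    have h4 : ((m0 - ℓ) / (2 * (1 + t))) * (1 + t) = (m0 - ℓ) / 2 := by
      field_simp
    rw [h4] at h3
    linarith
  have h5 := key t ht ε hε hεb t ⟨ht, le_rfl⟩ k hk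
  have h6 : ε * (1 + t) ≤ δ / 2 := by
    have h2 := min_le_left (δ / (2 * (1 + t))) ((m0 - ℓ) / (2 * (1 + t)))
    have h3 : ε * (1 + t) ≤ (δ / (2 * (1 + t))) * (1 + t) := by
      apply mul_le_mul_of_nonneg_right _ h1t.le
      rw [hεdef]; exact h2
    have h4 : (δ / (2 * (1 + t))) * (1 + t) = δ / 2 := by field_simp
    linarith
  rw [hδdef] at h6
  linarith
/-- The nonlocal Follow-the-Leader system is collision-free: if initially
`x_{i+1}(0) − x_i(0) > ℓ`, then for all `t ≥ 0`,
`x_{i+1}(t) − x_i(t) ≥ min_j (x_{j+1}(0) − x_j(0)) ≥ ℓ`. -/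
theorem stmt_10 (M : ℕ) (hM : 1 ≤ M) (N : ℕ) (hN : 1 ≤ N)
    (ℓ κ P : ℝ) (hℓ : 0 < ℓ) (hκ : 0 ≤ κ) (hP : 0 < P)
    (c : ℕ → ℝ) (hcmono : ∀ j < N, c (j + 1) ≤ c j)
    (hcnonneg : ∀ j ≤ N, 0 ≤ c j) (hcN : c N = 0)
    (hcsum : ∑ j ∈ Finset.range (N + 1), c j = 1)
    (v : ℝ → ℝ) (K : NNReal)
    (hvmono : AntitoneOn v (Set.Icc 0 1))
    (hvLip : LipschitzOnWith K v (Set.Icc 0 1))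
    (hvmap : ∀ s ∈ Set.Icc (0:ℝ) 1, v s ∈ Set.Icc (0:ℝ) 1)
    (hv0 : v 0 = 1) (hv1 : v 1 = 0)
    (x : ℤ → ℝ → ℝ)
    (hper : ∀ i : ℤ, ∀ t : ℝ, x (i + M) t = x i t + P)
    (hinit : ∀ i : ℤ, ℓ < x (i + 1) 0 - x i 0)
    (hode : ∀ i : ℤ, ∀ t : ℝ, 0 ≤ t →
      HasDerivAt (x i)
        ((∑ j ∈ Finset.range (N + 1),
            c j * v (ℓ / (x (i + j + 1) t - x (i + j) t))) +
          κ * (v (ℓ / (x (i + 1) t - x i t)) - v (ℓ / (x i t - x (i - 1) t)))) t) :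
    ∀ t : ℝ, 0 ≤ t → ∀ i : ℤ,
      ℓ ≤ x (i + 1) t - x i t ∧
        sInf (Set.range fun j : ℤ => x (j + 1) 0 - x j 0) ≤ x (i + 1) t - x i t := by
  have hMZ : (0:ℤ) < (M:ℤ) := by exact_mod_cast hM
  -- E i t : the right-hand side of the ODE
  set E : ℤ → ℝ → ℝ := fun i t =>
    (∑ j ∈ Finset.range (N + 1),
        c j * v (ℓ / (x (i + j + 1) t - x (i + j) t))) +
      κ * (v (ℓ / (x (i + 1) t - x i t)) - v (ℓ / (x i t - x (i - 1) t))) with hEdef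
  -- periodicity in blocks
  have hxZ : ∀ n : ℤ, ∀ i : ℤ, ∀ t : ℝ, x (i + n * M) t = x i t + n * P := by
    intro n
    induction n using Int.induction_on with
    | zero => intro i t; simp
    | succ n ih =>
        intro i t
        have h1 : i + ((n : ℤ) + 1) * M = (i + n * M) + M := by ring
        rw [h1, hper, ih]
        push_cast
        ring
    | pred n ih =>
        intro i t
        have h1 : (i + (-(n:ℤ) - 1) * M) + M = i + (-(n:ℤ)) * M := by ring
        have h2 := hper (i + (-(n:ℤ) - 1) * (M:ℤ)) t
        rw [h1, ih i t] at h2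
        push_cast at h2 ⊢
        linarith
  have hgZ : ∀ n i : ℤ, ∀ t : ℝ, x (i + n * M + 1) t - x (i + n * M) t
      = x (i + 1) t - x i t := by
    intro n i t
    have e : i + n * M + 1 = (i + 1) + n * M := by ring
    rw [e, hxZ n (i+1) t, hxZ n i t]
    ring
  -- reduction of any gap to a gap with index in [0, M)
  have hred : ∀ i : ℤ, ∀ t : ℝ, ∃ k : ℕ, k < M ∧
      x (i + 1) t - x i t = x ((k:ℤ) + 1) t - x (k:ℤ) t := by
    intro i t
    have h1 : i % (M:ℤ) < M := Int.emod_lt_of_pos i hMZ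
    have h2 : 0 ≤ i % (M:ℤ) := Int.emod_nonneg i (by omega)
    refine ⟨(i % (M:ℤ)).toNat, by omega, ?_⟩
    have h3 : (((i % (M:ℤ)).toNat : ℤ)) = i % (M:ℤ) := Int.toNat_of_nonneg h2
    rw [h3]
    have h4 : i % (M:ℤ) + (i / (M:ℤ)) * M = i := Int.emod_add_ediv_mul i M
    conv_lhs => rw [← h4]
    exact hgZ (i / (M:ℤ)) (i % (M:ℤ)) t
  -- minimum of the initial gaps
  have hne : (Finset.range M).Nonempty := Finset.nonempty_range_iff.mpr (by omega)
  set m0 : ℝ := (Finset.range M).inf' hne (fun k => x ((k:ℤ) + 1) 0 - x (k:ℤ) 0) with hm0def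
  have hm0 : ℓ < m0 := by
    obtain ⟨k0, hk0mem, hk0⟩ := Finset.exists_mem_eq_inf' hne
      (fun k : ℕ => x ((k:ℤ) + 1) 0 - x (k:ℤ) 0)
    rw [hm0def, hk0]
    exact hinit (k0 : ℤ)
  -- derivative of the gaps
  have hgode : ∀ k : ℕ, k < M → ∀ t : ℝ, 0 ≤ t →
      HasDerivAt (fun s => x ((k:ℤ) + 1) s - x (k:ℤ) s)
        (E ((k:ℤ) + 1) t - E (k:ℤ) t) t := by
    intro k _ t ht
    exact (hode ((k:ℤ)+1) t ht).sub (hode (k:ℤ) t ht)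
  -- the crucial sign condition at interior minima
  have hpos : ∀ t : ℝ, 0 ≤ t → ∀ k : ℕ, k < M →
      ℓ < x ((k:ℤ) + 1) t - x (k:ℤ) t →
      (∀ j : ℕ, j < M → x ((k:ℤ) + 1) t - x (k:ℤ) t ≤ x ((j:ℤ) + 1) t - x (j:ℤ) t) →
      0 ≤ E ((k:ℤ) + 1) t - E (k:ℤ) t := by
    intro t ht k hkM hℓk hmin
    -- minimality over all integer indices
    have hminZ : ∀ i : ℤ, x ((k:ℤ) + 1) t - x (k:ℤ) t ≤ x (i + 1) t - x i t := by
      intro i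
      obtain ⟨j, hjM, hjeq⟩ := hred i t
      rw [hjeq]
      exact hmin j hjM
    have hℓZ : ∀ i : ℤ, ℓ < x (i + 1) t - x i t := fun i => lt_of_lt_of_le hℓk (hminZ i)
    have hVZ : ∀ i : ℤ, v (ℓ / (x ((k:ℤ) + 1) t - x (k:ℤ) t))
        ≤ v (ℓ / (x (i + 1) t - x i t)) := by
      intro i
      have h1 := hℓZ i
      have h2 := hminZ i
      have hposk : 0 < x ((k:ℤ) + 1) t - x (k:ℤ) t := lt_trans hℓ hℓk
      have hposi : 0 < x (i + 1) t - x i t := lt_trans hℓ h1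
      have hdiv : ℓ / (x (i + 1) t - x i t) ≤ ℓ / (x ((k:ℤ) + 1) t - x (k:ℤ) t) := by
        gcongr
      exact hvmono
        ⟨div_nonneg hℓ.le hposi.le, (div_le_one hposi).mpr h1.le⟩
        ⟨div_nonneg hℓ.le hposk.le, (div_le_one hposk).mpr hℓk.le⟩
        hdiv
    set a : ℕ → ℝ := fun j => v (ℓ / (x ((k:ℤ) + j + 1) t - x ((k:ℤ) + j) t)) with hadef
    have ha0 : a 0 = v (ℓ / (x ((k:ℤ) + 1) t - x (k:ℤ) t)) := by
      simp only [hadef, Nat.cast_zero, add_zero]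
    have haj : ∀ j : ℕ, j ≤ N + 1 → a 0 ≤ a j := by
      intro j _
      rw [ha0, hadef]
      exact hVZ ((k:ℤ) + (j:ℕ))
    have h1 : 0 ≤ ∑ j ∈ Finset.range (N + 1), c j * (a (j + 1) - a j) :=
      abel_nonneg c a N hcmono hcN haj
    -- rewrite both sums
    have hsum1 : (∑ j ∈ Finset.range (N + 1),
        c j * v (ℓ / (x ((k:ℤ) + 1 + j + 1) t - x ((k:ℤ) + 1 + j) t)))
        = ∑ j ∈ Finset.range (N + 1), c j * a (j + 1) := by
      refine Finset.sum_congr rfl fun j _ => ?_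
      simp only [hadef]
      push_cast
      ring_nf
    have hsum2 : (∑ j ∈ Finset.range (N + 1),
        c j * v (ℓ / (x ((k:ℤ) + j + 1) t - x ((k:ℤ) + j) t)))
        = ∑ j ∈ Finset.range (N + 1), c j * a j := by
      refine Finset.sum_congr rfl fun j _ => ?_
      simp only [hadef]
    have hdist : (∑ j ∈ Finset.range (N + 1), c j * a (j + 1))
        - (∑ j ∈ Finset.range (N + 1), c j * a j)
        = ∑ j ∈ Finset.range (N + 1), c j * (a (j + 1) - a j) := by
      rw [← Finset.sum_sub_distrib]
      exact Finset.sum_congr rfl fun j _ => by ring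
    -- the κ-terms
    have ha1 : a 1 = v (ℓ / (x ((k:ℤ) + 1 + 1) t - x ((k:ℤ) + 1) t)) := by
      simp only [hadef, Nat.cast_one]
    have hκ1 : a 0 ≤ a 1 := haj 1 (by omega)
    have hκ2 : a 0 ≤ v (ℓ / (x (k:ℤ) t - x ((k:ℤ) - 1) t)) := by
      have h5 := hVZ ((k:ℤ) - 1)
      rw [show (k:ℤ) - 1 + 1 = (k:ℤ) from by ring] at h5
      rw [ha0]
      exact h5
    have hκterm : 0 ≤ κ * ((a 1 - a 0) - (a 0 - v (ℓ / (x (k:ℤ) t - x ((k:ℤ) - 1) t)))) :=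
      mul_nonneg hκ (by linarith)
    -- expand E
    have hE1 : E ((k:ℤ) + 1) t = (∑ j ∈ Finset.range (N + 1), c j * a (j + 1))
        + κ * (v (ℓ / (x ((k:ℤ) + 1 + 1) t - x ((k:ℤ) + 1) t)) - a 0) := by
      rw [hEdef]
      simp only
      rw [hsum1, ha0]
      congr 3
      rw [show (k:ℤ) + 1 - 1 = (k:ℤ) from by ring]
    have hE2 : E (k:ℤ) t = (∑ j ∈ Finset.range (N + 1), c j * a j)
        + κ * (a 0 - v (ℓ / (x (k:ℤ) t - x ((k:ℤ) - 1) t))) := by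
      rw [hEdef]
      simp only
      rw [hsum2, ha0]
    rw [hE1, hE2, ← ha1]
    have hκterm' := hκterm
    nlinarith [h1, hdist]
  -- apply the minimum principle
  have key := min_principle M (by omega)
    (fun k t => x ((k:ℤ) + 1) t - x (k:ℤ) t)
    (fun k t => E ((k:ℤ) + 1) t - E (k:ℤ) t)
    hgode ℓ m0 hm0
    (fun k hk => Finset.inf'_le _ (Finset.mem_range.mpr hk))
    hpos
  -- conclude
  intro t ht i
  obtain ⟨k, hkM, hkeq⟩ := hred i t
  have hkey : m0 ≤ x ((k:ℤ) + 1) t - x (k:ℤ) t := key t ht k hkM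
  constructor
  · rw [hkeq]
    linarith
  · have hbdd : BddBelow (Set.range fun j : ℤ => x (j + 1) 0 - x j 0) := by
      refine ⟨m0, ?_⟩
      rintro y ⟨j, rfl⟩
      show m0 ≤ x (j + 1) 0 - x j 0
      obtain ⟨k', hk'M, hk'eq⟩ := hred j 0
      rw [hk'eq]
      exact Finset.inf'_le _ (Finset.mem_range.mpr hk'M)
    have hmem : m0 ∈ Set.range fun j : ℤ => x (j + 1) 0 - x j 0 := by
      obtain ⟨k0, hk0mem, hk0⟩ := Finset.exists_mem_eq_inf' hne
        (fun k : ℕ => x ((k:ℤ) + 1) 0 - x (k:ℤ) 0)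
      exact ⟨(k0 : ℤ), by rw [hm0def, hk0]⟩
    have h6 : sInf (Set.range fun j : ℤ => x (j + 1) 0 - x j 0) ≤ m0 := csInf_le hbdd hmem
    rw [hkeq]
    linarith
end

section
/- (Local model, N = 1.) Let ρ_i : [0,T] → (0,1], i ∈ ℤ M-periodic, be a C¹ solution of ℓ ρ̇_i = −ρ_i²(Δ₊v_i + κ Δ₊Δ₋v_i), where v_i = v(ρ_i) with v nonincreasing and C¹, κ ≥ 0. Then the discrete total variation Σ_{i=1}^M |ρ_i(t) − ρ_{i−1}(t)| is non-increasing in t. -/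
open Finset Set Topology Filter Asymptotics

noncomputable def sgnAux (g c : ℝ) : ℝ :=
  if 0 < g then 1 else if g < 0 then -1 else if c < 0 then -1 else 1

lemma sgnAux_abs_le (g c : ℝ) : |sgnAux g c| ≤ 1 := by
  unfold sgnAux; split_ifs <;> norm_num


lemma sum_shift_per (M : ℕ) (hM : 1 ≤ M) (h : ℤ → ℝ) (hp : ∀ i, h (i + M) = h i) :
    ∑ i ∈ Finset.Icc (1:ℤ) M, h (i + 1) = ∑ i ∈ Finset.Icc (1:ℤ) M, h i := by
  have e1 : ∑ i ∈ Finset.Icc (1:ℤ) M, h (i + 1) = ∑ j ∈ Finset.Icc (2:ℤ) ((M:ℤ)+1), h j := by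
    rw [show Finset.Icc (2:ℤ) ((M:ℤ)+1) = (Finset.Icc (1:ℤ) M).map (addRightEmbedding 1) by
      rw [Finset.map_add_right_Icc]; norm_num]
    rw [Finset.sum_map]
    rfl
  have hM' : (1:ℤ) ≤ (M:ℤ) := by exact_mod_cast hM
  have e2 : Finset.Icc (2:ℤ) ((M:ℤ)+1) = insert ((M:ℤ)+1) (Finset.Icc 2 (M:ℤ)) := by
    ext j; simp; omega
  have e3 : Finset.Icc (1:ℤ) (M:ℤ) = insert 1 (Finset.Icc 2 (M:ℤ)) := by
    ext j; simp; omega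
  rw [e1, e2, e3, Finset.sum_insert (by simp), Finset.sum_insert (by simp)]
  have : h ((M:ℤ)+1) = h 1 := by rw [show (M:ℤ)+1 = 1 + (M:ℤ) by ring, hp]
  rw [this]

lemma sum_shift_per' (M : ℕ) (hM : 1 ≤ M) (h : ℤ → ℝ) (hp : ∀ i, h (i + M) = h i) :
    ∑ i ∈ Finset.Icc (1:ℤ) M, h (i - 1) = ∑ i ∈ Finset.Icc (1:ℤ) M, h i := by
  have := sum_shift_per M hM (fun i => h (i - 1)) (fun i => by
    rw [show i + (M:ℤ) - 1 = (i - 1) + (M:ℤ) by ring, hp])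
  simp only [add_sub_cancel_right] at this
  rw [← this]

lemma keyIneq (M : ℕ) (hM : 1 ≤ M) (κ : ℝ) (hκ : 0 ≤ κ)
    (u A D : ℤ → ℝ)
    (hu : ∀ i, u (i + M) = u i) (hA : ∀ i, A (i + M) = A i) (hD : ∀ i, D (i + M) = D i)
    (hu1 : ∀ i, |u i| ≤ 1) (hA0 : ∀ i, 0 ≤ A i) (huD : ∀ i, u i * D i = -|D i|) :
    ∑ i ∈ Finset.Icc (1:ℤ) (M:ℤ),
      u i * ((-(A i * ((1+κ) * D (i+1) - κ * D i))) - (-(A (i-1) * ((1+κ) * D i - κ * D (i-1))))) ≤ 0 := by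
  have h1 : ∑ i ∈ Finset.Icc (1:ℤ) (M:ℤ), (-(1+κ)) * (u i * A i * D (i+1))
      = ∑ i ∈ Finset.Icc (1:ℤ) (M:ℤ), (-(1+κ)) * (u (i-1) * A (i-1) * D i) := by
    have := sum_shift_per M hM (fun i => (-(1+κ)) * (u (i-1) * A (i-1) * D i)) (fun i => by
      rw [show i + (M:ℤ) - 1 = (i - 1) + (M:ℤ) by ring, hu, hA, hD])
    simp only [add_sub_cancel_right] at this
    rw [← this]
  have h2 : ∑ i ∈ Finset.Icc (1:ℤ) (M:ℤ), (-κ) * (u i * A (i-1) * D (i-1))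
      = ∑ i ∈ Finset.Icc (1:ℤ) (M:ℤ), (-κ) * (u (i+1) * A i * D i) := by
    have := sum_shift_per' M hM (fun i => (-κ) * (u (i+1) * A i * D i)) (fun i => by
      rw [show i + (M:ℤ) + 1 = (i + 1) + (M:ℤ) by ring, hu, hA, hD])
    simp only [sub_add_cancel] at this
    rw [← this]
  have expand : ∑ i ∈ Finset.Icc (1:ℤ) (M:ℤ),
      u i * ((-(A i * ((1+κ) * D (i+1) - κ * D i))) - (-(A (i-1) * ((1+κ) * D i - κ * D (i-1)))))
      = (∑ i ∈ Finset.Icc (1:ℤ) (M:ℤ), (-(1+κ)) * (u i * A i * D (i+1)))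
        + (∑ i ∈ Finset.Icc (1:ℤ) (M:ℤ), (-κ) * (u i * A (i-1) * D (i-1)))
        + ∑ i ∈ Finset.Icc (1:ℤ) (M:ℤ), (κ * (A i * (u i * D i)) + (1+κ) * (A (i-1) * (u i * D i))) := by
    rw [← Finset.sum_add_distrib, ← Finset.sum_add_distrib]
    exact Finset.sum_congr rfl (fun i _ => by ring)
  rw [expand, h1, h2, ← Finset.sum_add_distrib, ← Finset.sum_add_distrib]
  apply Finset.sum_nonpos
  intro i _
  rw [huD i]
  have habs1 : |u (i-1) * D i| ≤ |D i| := by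
    rw [abs_mul]; exact mul_le_of_le_one_left (abs_nonneg _) (hu1 _)
  have habs2 : |u (i+1) * D i| ≤ |D i| := by
    rw [abs_mul]; exact mul_le_of_le_one_left (abs_nonneg _) (hu1 _)
  have b1 : -|D i| ≤ u (i-1) * D i := by
    have := neg_abs_le (u (i-1) * D i); linarith
  have b2 : -|D i| ≤ u (i+1) * D i := by
    have := neg_abs_le (u (i+1) * D i); linarith
  have f1 : 0 ≤ (1+κ) * A (i-1) * (u (i-1) * D i + |D i|) :=
    mul_nonneg (mul_nonneg (by linarith) (hA0 _)) (by linarith)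
  have f2 : 0 ≤ κ * A i * (u (i+1) * D i + |D i|) :=
    mul_nonneg (mul_nonneg hκ (hA0 _)) (by linarith)
  nlinarith [f1, f2]

lemma sgnAux_mul_self (g c : ℝ) : sgnAux g c * g = |g| := by
  unfold sgnAux; split_ifs with h1 h2 h3
  · rw [abs_of_pos h1]; ring
  · rw [abs_of_neg h2]; ring
  · have : g = 0 := le_antisymm (not_lt.1 h1) (not_lt.1 h2); simp [this]
  · have : g = 0 := le_antisymm (not_lt.1 h1) (not_lt.1 h2); simp [this]

lemma hasDerivWithinAt_abs_right {g : ℝ → ℝ} {c t : ℝ} (hg : HasDerivAt g c t) :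
    HasDerivWithinAt (fun x => |g x|) (sgnAux (g t) c * c) (Ici t) t := by
  rcases lt_trichotomy (g t) 0 with hneg | hzero | hpos
  · have hs : sgnAux (g t) c = -1 := by unfold sgnAux; rw [if_neg (by linarith), if_pos hneg]
    rw [hs]
    have hev : ∀ᶠ x in 𝓝 t, g x < 0 := hg.continuousAt.eventually_lt_const hneg
    have := (hg.neg).hasDerivWithinAt (s := Ici t)
    refine HasDerivWithinAt.congr_of_eventuallyEq (by simpa using this) ?_ (abs_of_neg hneg)
    exact (hev.filter_mono nhdsWithin_le_nhds).mono (fun x hx => abs_of_neg hx)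
  · -- g t = 0 : right derivative is |c|
    have hs : sgnAux (g t) c * c = |c| := by
      unfold sgnAux
      rw [if_neg (by rw [hzero]; exact lt_irrefl 0), if_neg (by rw [hzero]; exact lt_irrefl 0)]
      split_ifs with hc
      · rw [abs_of_neg hc]; ring
      · rw [abs_of_nonneg (not_lt.1 hc)]; ring
    rw [hs, hasDerivWithinAt_iff_isLittleO]
    have hlo := (hasDerivAt_iff_isLittleO.1 hg).mono (nhdsWithin_le_nhds (s := Ici t))
    have hbigO : (fun x => |g x| - |g t| - (x - t) • |c|)
        =O[𝓝[Ici t] t] (fun x => g x - g t - (x - t) • c) := by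
      rw [Asymptotics.isBigO_iff]
      refine ⟨1, ?_⟩
      filter_upwards [self_mem_nhdsWithin] with x (hx : t ≤ x)
      rw [hzero]
      simp only [smul_eq_mul, sub_zero, one_mul, Real.norm_eq_abs, abs_zero]
      have h1 : (x - t) * |c| = |(x - t) * c| := by
        rw [abs_mul]; congr 1; exact (abs_of_nonneg (by linarith)).symm
      rw [h1]
      exact abs_abs_sub_abs_le_abs_sub _ _
    exact hbigO.trans_isLittleO hlo
  · have hs : sgnAux (g t) c = 1 := by unfold sgnAux; rw [if_pos hpos]
    rw [hs, one_mul]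
    have hev : ∀ᶠ x in 𝓝 t, 0 < g x := hg.continuousAt.eventually_const_lt hpos
    refine HasDerivWithinAt.congr_of_eventuallyEq hg.hasDerivWithinAt ?_ (abs_of_pos hpos)
    exact (hev.filter_mono nhdsWithin_le_nhds).mono (fun x hx => abs_of_pos hx)


noncomputable def FTL (v : ℝ → ℝ) (κ ℓ : ℝ) (ρ : ℤ → ℝ → ℝ) (i : ℤ) (t : ℝ) : ℝ :=
  -(ρ i t) ^ 2 *
      ((v (ρ (i + 1) t) - v (ρ i t)) +
        κ * (v (ρ (i + 1) t) - 2 * v (ρ i t) + v (ρ (i - 1) t))) / ℓ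

/-- Discrete BV decay for the local (`N = 1`) Follow-the-Leader model in
Eulerian density form: if `ℓ ρ̇_i = −ρ_i²(Δ₊v_i + κ Δ₊Δ₋ v_i)` with `v_i = v(ρ_i)`,
then `∑_i |ρ_i(t) − ρ_{i−1}(t)|` is non-increasing on `[0,T]`. -/
theorem stmt_12 (M : ℕ) (hM : 1 ≤ M) (ℓ κ T : ℝ) (hℓ : 0 < ℓ) (hκ : 0 ≤ κ)
    (hT : 0 ≤ T)
    (v : ℝ → ℝ) (hv : ContDiff ℝ 1 v) (hvmono : Antitone v)
    (ρ : ℤ → ℝ → ℝ)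
    (hper : ∀ i : ℤ, ∀ t : ℝ, ρ (i + M) t = ρ i t)
    (hrange : ∀ i : ℤ, ∀ t ∈ Set.Icc (0:ℝ) T, 0 < ρ i t ∧ ρ i t ≤ 1)
    (hode : ∀ i : ℤ, ∀ t ∈ Set.Icc (0:ℝ) T,
      HasDerivAt (ρ i)
        (-(ρ i t) ^ 2 *
            ((v (ρ (i + 1) t) - v (ρ i t)) +
              κ * (v (ρ (i + 1) t) - 2 * v (ρ i t) + v (ρ (i - 1) t))) / ℓ) t) :
    AntitoneOn (fun t => ∑ i ∈ Finset.Icc (1:ℤ) (M:ℤ), |ρ i t - ρ (i - 1) t|)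
      (Set.Icc 0 T) := by
  intro x hx y hy hxy
  simp only []
  have hsub : Set.Icc x y ⊆ Set.Icc (0:ℝ) T := Set.Icc_subset_Icc hx.1 hy.2
  -- the candidate right derivative of the total variation
  set φ : ℝ → ℝ := fun t => ∑ i ∈ Finset.Icc (1:ℤ) (M:ℤ),
      sgnAux (ρ i t - ρ (i - 1) t) (FTL v κ ℓ ρ i t - FTL v κ ℓ ρ (i - 1) t) *
        (FTL v κ ℓ ρ i t - FTL v κ ℓ ρ (i - 1) t) with hφ
  have hcont : ContinuousOn (fun t => ∑ i ∈ Finset.Icc (1:ℤ) (M:ℤ), |ρ i t - ρ (i - 1) t|)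
      (Set.Icc x y) := by
    apply continuousOn_finset_sum
    intro i _
    apply ContinuousOn.abs
    apply ContinuousOn.sub
    · exact fun t ht => ((hode i t (hsub ht)).continuousAt).continuousWithinAt
    · exact fun t ht => ((hode (i-1) t (hsub ht)).continuousAt).continuousWithinAt
  have hderiv : ∀ z ∈ Set.Ico x y,
      HasDerivWithinAt (fun t => ∑ i ∈ Finset.Icc (1:ℤ) (M:ℤ), |ρ i t - ρ (i - 1) t|)
        (φ z) (Set.Ici z) z := by
    intro z hz
    have hz' : z ∈ Set.Icc (0:ℝ) T := hsub ⟨hz.1, hz.2.le⟩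
    apply HasDerivWithinAt.fun_sum
    intro i _
    have hgd : HasDerivAt (fun t => ρ i t - ρ (i - 1) t)
        (FTL v κ ℓ ρ i z - FTL v κ ℓ ρ (i - 1) z) z :=
      (hode i z hz').sub (hode (i-1) z hz')
    exact hasDerivWithinAt_abs_right hgd
  have hbound : ∀ z ∈ Set.Ico x y, φ z ≤ 0 := by
    intro z hz
    have hz' : z ∈ Set.Icc (0:ℝ) T := hsub ⟨hz.1, hz.2.le⟩
    have hρp : ∀ i : ℤ, ρ (i + M) z = ρ i z := fun i => hper i z
    have hρp1 : ∀ i : ℤ, ρ (i + M - 1) z = ρ (i - 1) z := fun i => by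
      rw [show i + (M:ℤ) - 1 = (i - 1) + (M:ℤ) by ring, hρp]
    have hFper : ∀ i : ℤ, FTL v κ ℓ ρ (i + M) z = FTL v κ ℓ ρ i z := by
      intro i
      simp only [FTL]
      rw [show i + (M:ℤ) + 1 = (i + 1) + (M:ℤ) by ring,
        show i + (M:ℤ) - 1 = (i - 1) + (M:ℤ) by ring, hρp, hρp, hρp]
    have hu : ∀ i : ℤ, sgnAux (ρ (i + M) z - ρ (i + M - 1) z)
        (FTL v κ ℓ ρ (i + M) z - FTL v κ ℓ ρ (i + M - 1) z)
        = sgnAux (ρ i z - ρ (i - 1) z) (FTL v κ ℓ ρ i z - FTL v κ ℓ ρ (i - 1) z) := by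
      intro i
      rw [show i + (M:ℤ) - 1 = (i - 1) + (M:ℤ) by ring, hρp, hρp, hFper, hFper]
    have hA : ∀ i : ℤ, (ρ (i + M) z) ^ 2 = (ρ i z) ^ 2 := fun i => by rw [hρp]
    have hD : ∀ i : ℤ, v (ρ (i + M) z) - v (ρ (i + M - 1) z)
        = v (ρ i z) - v (ρ (i - 1) z) := fun i => by rw [hρp, hρp1]
    have huD : ∀ i : ℤ,
        sgnAux (ρ i z - ρ (i - 1) z) (FTL v κ ℓ ρ i z - FTL v κ ℓ ρ (i - 1) z) *
          (v (ρ i z) - v (ρ (i - 1) z)) = -|v (ρ i z) - v (ρ (i - 1) z)| := by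
      intro i
      rcases lt_trichotomy (ρ i z - ρ (i - 1) z) 0 with h | h | h
      · have hD0 : 0 ≤ v (ρ i z) - v (ρ (i - 1) z) := by
          have := hvmono (show ρ i z ≤ ρ (i - 1) z by linarith); linarith
        have hs : sgnAux (ρ i z - ρ (i - 1) z)
            (FTL v κ ℓ ρ i z - FTL v κ ℓ ρ (i - 1) z) = -1 := by
          unfold sgnAux; rw [if_neg (by linarith), if_pos h]
        rw [hs, abs_of_nonneg hD0]; ring
      · have heq : ρ i z = ρ (i - 1) z := by linarith
        rw [heq]; simp
      · have hD0 : v (ρ i z) - v (ρ (i - 1) z) ≤ 0 := by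
          have := hvmono (show ρ (i - 1) z ≤ ρ i z by linarith); linarith
        have hs : sgnAux (ρ i z - ρ (i - 1) z)
            (FTL v κ ℓ ρ i z - FTL v κ ℓ ρ (i - 1) z) = 1 := by
          unfold sgnAux; rw [if_pos h]
        rw [hs, abs_of_nonpos hD0]; ring
    have hkey := keyIneq M hM κ hκ
      (fun i => sgnAux (ρ i z - ρ (i - 1) z) (FTL v κ ℓ ρ i z - FTL v κ ℓ ρ (i - 1) z))
      (fun i => (ρ i z) ^ 2)
      (fun i => v (ρ i z) - v (ρ (i - 1) z))
      hu hA hD (fun i => sgnAux_abs_le _ _) (fun i => sq_nonneg _) huD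
    have hrw : φ z = (∑ i ∈ Finset.Icc (1:ℤ) (M:ℤ),
        sgnAux (ρ i z - ρ (i - 1) z) (FTL v κ ℓ ρ i z - FTL v κ ℓ ρ (i - 1) z) *
          ((-((ρ i z) ^ 2 * ((1 + κ) * (v (ρ (i + 1) z) - v (ρ (i + 1 - 1) z))
              - κ * (v (ρ i z) - v (ρ (i - 1) z)))))
            - (-((ρ (i - 1) z) ^ 2 * ((1 + κ) * (v (ρ i z) - v (ρ (i - 1) z))
              - κ * (v (ρ (i - 1) z) - v (ρ (i - 1 - 1) z))))))) / ℓ := by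
      rw [hφ, Finset.sum_div]
      refine Finset.sum_congr rfl (fun i _ => ?_)
      have e1 : i + 1 - 1 = i := by ring
      have e2 : i - 1 + 1 = i := by ring
      simp only [FTL, e1, e2]
      field_simp
      ring
    rw [hrw]
    apply div_nonpos_of_nonpos_of_nonneg _ hℓ.le
    exact hkey
  have key := image_le_of_deriv_right_le_deriv_boundary (f' := φ) hcont hderiv
    (le_refl ((fun t => ∑ i ∈ Finset.Icc (1:ℤ) (M:ℤ), |ρ i t - ρ (i - 1) t|) x))
    (continuousOn_const (c := (fun t => ∑ i ∈ Finset.Icc (1:ℤ) (M:ℤ), |ρ i t - ρ (i - 1) t|) x))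
    (B' := fun _ => 0) (fun z _ => hasDerivWithinAt_const z _ _) hbound
  exact key ⟨hxy, le_refl y⟩
end

section
/- For any M-periodic real sequences (ρ_i) with ρ_i > 0 and (v_i), Σ_{i=1}^M sign(v_i − v_{i−1}) · (ρ_i²(v_{i+1} − v_i) − ρ_{i−1}²(v_i − v_{i−1})) ≤ 0, where the first periodic rearrangement gives Σ_i [sign(v_i − v_{i−1}) ρ_i²(v_{i+1} − v_i) − ρ_i²|v_{i+1} − v_i|] ≤ 0. -/
/-!
Since `sign a * a = |a|` and `sign a * b ≤ |b|`, the `i`-th summand is at most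
`ρ_i² |v_{i+1} - v_i| - ρ_{i-1}² |v_i - v_{i-1}|`, i.e. `g i - g (i - 1)` for the `M`-periodic
`g j = ρ_j² |v_{j+1} - v_j|`; summed over one period these differences cancel.
-/

open Finset

theorem Real.sign_mul_self_eq_abs (a : ℝ) : Real.sign a * a = |a| := by
  rcases lt_trichotomy a 0 with h | rfl | h
  · rw [Real.sign_of_neg h, abs_of_neg h, neg_one_mul]
  · simp
  · rw [Real.sign_of_pos h, abs_of_pos h, one_mul]

theorem Real.sign_mul_le_abs (a b : ℝ) : Real.sign a * b ≤ |b| := by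
  rcases Real.sign_apply_eq a with h | h | h <;> rw [h]
  · simpa using neg_le_abs b
  · simp
  · simpa using le_abs_self b

theorem Real.sign_mul_sub_mul_le {p : ℝ} (hp : 0 ≤ p) (q a b : ℝ) :
    Real.sign a * (p * b - q * a) ≤ p * |b| - q * |a| := by
  have hb : Real.sign a * (p * b) ≤ p * |b| := by
    rw [mul_left_comm]
    exact mul_le_mul_of_nonneg_left (Real.sign_mul_le_abs a b) hp
  calc Real.sign a * (p * b - q * a) = Real.sign a * (p * b) - q * (Real.sign a * a) := by ring
    _ ≤ p * |b| - q * |a| := by rw [Real.sign_mul_self_eq_abs]; linarith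

theorem Function.Periodic.sum_Icc_one_comp_sub_one {α : Type*} [AddCommMonoid α] {g : ℤ → α}
    {T : ℤ} (hg : Function.Periodic g T) :
    ∑ i ∈ Icc 1 T, g (i - 1) = ∑ i ∈ Icc 1 T, g i := by
  rcases le_or_gt T 0 with hT | hT
  · rw [Icc_eq_empty_of_lt (by omega), sum_empty, sum_empty]
  have hshift : ∑ i ∈ Icc 1 T, g (i - 1) = ∑ j ∈ Icc 0 (T - 1), g j := by
    rw [show Icc 1 T = (Icc 0 (T - 1)).map (addRightEmbedding 1) by simp, sum_map]
    simp
  rw [hshift, ← insert_Icc_add_one_left_eq_Icc (by omega : (0 : ℤ) ≤ T - 1),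
    ← insert_Icc_sub_one_right_eq_Icc (by omega : (1 : ℤ) ≤ T), sum_insert (by simp),
    sum_insert (by simp), zero_add, ← hg 0, zero_add]

theorem stmt_13_general (M : ℕ) (ρ v : ℤ → ℝ)
    (hperρ : ∀ i : ℤ, ρ (i + M) = ρ i) (hperv : ∀ i : ℤ, v (i + M) = v i) :
    ∑ i ∈ Finset.Icc (1:ℤ) (M:ℤ),
        Real.sign (v i - v (i - 1)) *
          ((ρ i) ^ 2 * (v (i + 1) - v i) - (ρ (i - 1)) ^ 2 * (v i - v (i - 1)))
      ≤ 0 := by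
  have hg : Function.Periodic (fun j => ρ j ^ 2 * |v (j + 1) - v j|) M := fun j => by
    simp only [hperρ, add_right_comm j (M : ℤ) 1, hperv]
  have hcancel := hg.sum_Icc_one_comp_sub_one
  simp only [sub_add_cancel] at hcancel
  calc _ ≤ ∑ i ∈ Icc (1:ℤ) M, (ρ i ^ 2 * |v (i + 1) - v i| - ρ (i - 1) ^ 2 * |v i - v (i - 1)|) :=
        sum_le_sum fun i _ => Real.sign_mul_sub_mul_le (sq_nonneg _) _ _ _
    _ = 0 := by rw [sum_sub_distrib, hcancel, sub_self]

/-- Key algebraic inequality for the discrete BV bound in the local FtL model: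
`∑_{i=1}^M sign(v_i − v_{i−1}) (ρ_i² (v_{i+1} − v_i) − ρ_{i−1}² (v_i − v_{i−1})) ≤ 0`. -/
theorem stmt_13 (M : ℕ) (hM : 1 ≤ M) (ρ v : ℤ → ℝ)
    (hperρ : ∀ i : ℤ, ρ (i + M) = ρ i) (hperv : ∀ i : ℤ, v (i + M) = v i)
    (hρpos : ∀ i : ℤ, 0 < ρ i) :
    ∑ i ∈ Finset.Icc (1:ℤ) (M:ℤ),
        Real.sign (v i - v (i - 1)) *
          ((ρ i) ^ 2 * (v (i + 1) - v i) - (ρ (i - 1)) ^ 2 * (v i - v (i - 1)))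
      ≤ 0 :=
  stmt_13_general M ρ v hperρ hperv
end

section
/- Let (η_i), (v_i) be M-periodic sequences with |η_i| ≤ E and Σ_i |η_{i+1} − η_i| ≤ B, |v_i| ≤ Kv, and let (φ_i) satisfy |φ_{i+1} − φ_i| ≤ δ for all i. Then with η̄v̄ replaced appropriately: |Σ_{i=1}^M (η_i v̄_i − (η v)̄_i)(φ_{i+1} − φ_i)| ≤ Kv · δ · B · Σ_{j=0}^N j c_j, where ā_i = Σ_{j=0}^N c_j a_{i+j} with c_j ≥ 0, Σ c_j = 1, c_N = 0. -/
open Finset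


lemma shift1 (M : ℕ) (hM : 1 ≤ M) (f : ℤ → ℝ) (hf : ∀ i, f (i + M) = f i) :
    ∑ i ∈ Finset.Icc (1:ℤ) (M:ℤ), f (i + 1) = ∑ i ∈ Finset.Icc (1:ℤ) (M:ℤ), f i := by
  have hM1 : (1:ℤ) ≤ (M:ℤ) := by exact_mod_cast hM
  have h1 : ∑ i ∈ Finset.Icc (1:ℤ) (M:ℤ), f (i + 1)
      = ∑ i ∈ Finset.Icc (2:ℤ) ((M:ℤ)+1), f i := by
    have := Finset.map_add_right_Icc (1:ℤ) (M:ℤ) 1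
    rw [show ((2:ℤ)) = 1 + 1 by ring, ← this, Finset.sum_map]
    simp [addRightEmbedding]
  have h2 : Finset.Icc (2:ℤ) ((M:ℤ)+1) = insert ((M:ℤ)+1) (Finset.Icc (2:ℤ) (M:ℤ)) := by
    ext x; simp; omega
  have h3 : Finset.Icc (1:ℤ) (M:ℤ) = insert (1:ℤ) (Finset.Icc (2:ℤ) (M:ℤ)) := by
    ext x; simp; omega
  rw [h1, h2, h3, Finset.sum_insert (by simp), Finset.sum_insert (by simp)]
  have : f ((M:ℤ)+1) = f 1 := by rw [add_comm, hf 1]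
  rw [this]

lemma shiftk (M : ℕ) (hM : 1 ≤ M) (f : ℤ → ℝ) (hf : ∀ i, f (i + M) = f i) (k : ℕ) :
    ∑ i ∈ Finset.Icc (1:ℤ) (M:ℤ), f (i + k) = ∑ i ∈ Finset.Icc (1:ℤ) (M:ℤ), f i := by
  induction k with
  | zero => simp
  | succ n ih =>
    have := shift1 M hM (fun i => f (i + n)) (fun i => by
      rw [show i + (M:ℤ) + n = i + n + M by ring, hf])
    rw [← ih, ← this]
    apply Finset.sum_congr rfl
    intro i _
    congr 1
    push_cast
    ring


/-- Discrete commutator estimate for replacing `η_i v̄_i` by `(ηv)̄_i`: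
`|∑_i (η_i v̄_i − (ηv)̄_i)(φ_{i+1} − φ_i)| ≤ Kv · δ · B · ∑_j j c_j`. -/
theorem stmt_18 (M : ℕ) (hM : 1 ≤ M) (N : ℕ)
    (η v φ : ℤ → ℝ)
    (hperη : ∀ i : ℤ, η (i + M) = η i) (hperv : ∀ i : ℤ, v (i + M) = v i)
    (E B Kv δ : ℝ)
    (hE : ∀ i : ℤ, |η i| ≤ E)
    (hB : ∑ i ∈ Finset.Icc (1:ℤ) (M:ℤ), |η (i + 1) - η i| ≤ B)
    (hKv : ∀ i : ℤ, |v i| ≤ Kv)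
    (hδ : ∀ i : ℤ, |φ (i + 1) - φ i| ≤ δ)
    (c : ℕ → ℝ) (hc : ∀ j, 0 ≤ c j)
    (hcsum : ∑ j ∈ Finset.range (N + 1), c j = 1) (hcN : c N = 0) :
    |∑ i ∈ Finset.Icc (1:ℤ) (M:ℤ),
        (η i * (∑ j ∈ Finset.range (N + 1), c j * v (i + j)) -
          (∑ j ∈ Finset.range (N + 1), c j * (η (i + j) * v (i + j)))) *
          (φ (i + 1) - φ i)|
      ≤ Kv * δ * B * ∑ j ∈ Finset.range (N + 1), (j : ℝ) * c j := by
  have hKv0 : 0 ≤ Kv := (abs_nonneg _).trans (hKv 0)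
  have hδ0 : 0 ≤ δ := (abs_nonneg _).trans (hδ 0)
  set Δ : ℤ → ℝ := fun i => |η (i + 1) - η i| with hΔdef
  have hΔper : ∀ i, Δ (i + M) = Δ i := by
    intro i
    simp only [hΔdef]
    rw [show i + (M:ℤ) + 1 = (i+1) + M by ring, hperη, hperη]
  have hΔ0 : ∀ i, 0 ≤ Δ i := fun i => abs_nonneg _
  have hSΔ0 : 0 ≤ ∑ i ∈ Finset.Icc (1:ℤ) (M:ℤ), Δ i := Finset.sum_nonneg fun i _ => hΔ0 i
  have hSB : ∑ i ∈ Finset.Icc (1:ℤ) (M:ℤ), Δ i ≤ B := hB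
  have htel : ∀ (i : ℤ) (j : ℕ), |η i - η (i + j)| ≤ ∑ k ∈ Finset.range j, Δ (i + k) := by
    intro i j
    have h1 : η (i + j) - η i = ∑ k ∈ Finset.range j, (η (i + k + 1) - η (i + k)) := by
      have h := Finset.sum_range_sub (fun k : ℕ => η (i + k)) j
      rw [show η (i + (j:ℤ)) - η i = η (i + (j:ℤ)) - η (i + (0:ℕ)) by norm_num, ← h]
      apply Finset.sum_congr rfl
      intro k _
      congr 2
      push_cast; ring
    rw [abs_sub_comm, h1]
    calc |∑ k ∈ Finset.range j, (η (i + k + 1) - η (i + k))|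
        ≤ ∑ k ∈ Finset.range j, |η (i + k + 1) - η (i + k)| := Finset.abs_sum_le_sum_abs _ _
      _ = ∑ k ∈ Finset.range j, Δ (i + k) := rfl
  have hterm : ∀ i ∈ Finset.Icc (1:ℤ) (M:ℤ),
      |(η i * (∑ j ∈ Finset.range (N + 1), c j * v (i + j)) -
          (∑ j ∈ Finset.range (N + 1), c j * (η (i + j) * v (i + j)))) *
          (φ (i + 1) - φ i)|
      ≤ ∑ j ∈ Finset.range (N + 1), c j * Kv * δ * (∑ k ∈ Finset.range j, Δ (i + k)) := by
    intro i _
    have hrw : η i * (∑ j ∈ Finset.range (N + 1), c j * v (i + j)) -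
          (∑ j ∈ Finset.range (N + 1), c j * (η (i + j) * v (i + j)))
        = ∑ j ∈ Finset.range (N + 1), c j * ((η i - η (i + j)) * v (i + j)) := by
      rw [Finset.mul_sum, ← Finset.sum_sub_distrib]
      apply Finset.sum_congr rfl
      intro j _; ring
    rw [hrw, abs_mul]
    calc |∑ j ∈ Finset.range (N + 1), c j * ((η i - η (i + j)) * v (i + j))| * |φ (i + 1) - φ i|
        ≤ (∑ j ∈ Finset.range (N + 1), c j * ((∑ k ∈ Finset.range j, Δ (i + k)) * Kv)) * δ := by
          apply mul_le_mul _ (hδ i) (abs_nonneg _) _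
          · calc |∑ j ∈ Finset.range (N + 1), c j * ((η i - η (i + j)) * v (i + j))|
                ≤ ∑ j ∈ Finset.range (N + 1), |c j * ((η i - η (i + j)) * v (i + j))| :=
                  Finset.abs_sum_le_sum_abs _ _
              _ ≤ ∑ j ∈ Finset.range (N + 1), c j * ((∑ k ∈ Finset.range j, Δ (i + k)) * Kv) := by
                  apply Finset.sum_le_sum
                  intro j _
                  rw [abs_mul, abs_mul, abs_of_nonneg (hc j)]
                  apply mul_le_mul_of_nonneg_left _ (hc j)
                  exact mul_le_mul (htel i j) (hKv _) (abs_nonneg _)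
                    (Finset.sum_nonneg fun k _ => hΔ0 _)
          · apply Finset.sum_nonneg
            intro j _
            exact mul_nonneg (hc j) (mul_nonneg (Finset.sum_nonneg fun k _ => hΔ0 _) hKv0)
      _ = ∑ j ∈ Finset.range (N + 1), c j * Kv * δ * (∑ k ∈ Finset.range j, Δ (i + k)) := by
          rw [Finset.sum_mul]; apply Finset.sum_congr rfl; intro j _; ring
  calc |∑ i ∈ Finset.Icc (1:ℤ) (M:ℤ),
        (η i * (∑ j ∈ Finset.range (N + 1), c j * v (i + j)) -
          (∑ j ∈ Finset.range (N + 1), c j * (η (i + j) * v (i + j)))) *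
          (φ (i + 1) - φ i)|
      ≤ ∑ i ∈ Finset.Icc (1:ℤ) (M:ℤ),
        |(η i * (∑ j ∈ Finset.range (N + 1), c j * v (i + j)) -
          (∑ j ∈ Finset.range (N + 1), c j * (η (i + j) * v (i + j)))) *
          (φ (i + 1) - φ i)| := Finset.abs_sum_le_sum_abs _ _
    _ ≤ ∑ i ∈ Finset.Icc (1:ℤ) (M:ℤ), ∑ j ∈ Finset.range (N + 1),
          c j * Kv * δ * (∑ k ∈ Finset.range j, Δ (i + k)) := Finset.sum_le_sum hterm
    _ = ∑ j ∈ Finset.range (N + 1), c j * Kv * δ *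
          (∑ i ∈ Finset.Icc (1:ℤ) (M:ℤ), ∑ k ∈ Finset.range j, Δ (i + k)) := by
        rw [Finset.sum_comm]
        apply Finset.sum_congr rfl
        intro j _
        rw [Finset.mul_sum]
    _ = ∑ j ∈ Finset.range (N + 1), c j * Kv * δ *
          ((j : ℝ) * ∑ i ∈ Finset.Icc (1:ℤ) (M:ℤ), Δ i) := by
        apply Finset.sum_congr rfl
        intro j _
        congr 1
        rw [Finset.sum_comm]
        have : ∀ k ∈ Finset.range j, ∑ i ∈ Finset.Icc (1:ℤ) (M:ℤ), Δ (i + k)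
            = ∑ i ∈ Finset.Icc (1:ℤ) (M:ℤ), Δ i := fun k _ => shiftk M hM Δ hΔper k
        rw [Finset.sum_congr rfl this, Finset.sum_const, Finset.card_range, nsmul_eq_mul]
    _ ≤ ∑ j ∈ Finset.range (N + 1), c j * Kv * δ * ((j : ℝ) * B) := by
        apply Finset.sum_le_sum
        intro j _
        apply mul_le_mul_of_nonneg_left _ (mul_nonneg (mul_nonneg (hc j) hKv0) hδ0)
        exact mul_le_mul_of_nonneg_left hSB (by positivity)
    _ = Kv * δ * B * ∑ j ∈ Finset.range (N + 1), (j : ℝ) * c j := by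
        rw [Finset.mul_sum]
        apply Finset.sum_congr rfl
        intro j _; ring
end
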